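/- arXiv:1404.3703 — 8 statements merged into one kernel-verified Lean document; each statement's English description precedes it below -/
import Mathlib

section
/- Let B be a complete Boolean algebra and let {P_α : α ∈ I} be a nonempty family of partitions of B. Then this family has a supremum in the refinement order: there is a partition S of B such that P_α ⪯ S for every α ∈ I, and S ⪯ R for every partition R satisfying P_α ⪯ R for all α ∈ I. In particular, the set of partitions of B ordered by refinement is a lattice. -/
open Cardinal Filter

variable {B : Type*}

/-- A partition of a Boolean algebra: a set of nonzero, pairwise disjoint
elements that is maximal (every nonzero element meets some member). -/
def IsBPartition [BooleanAlgebra B] (P : Set B) : Prop :=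
  ⊥ ∉ P ∧ (P.Pairwise fun a b => a ⊓ b = ⊥) ∧ ∀ b : B, b ≠ ⊥ → ∃ p ∈ P, b ⊓ p ≠ ⊥

/-- `P` refines `Q`: every member of `P` lies below some member of `Q`. -/
def BRefines [BooleanAlgebra B] (P Q : Set B) : Prop :=
  ∀ p ∈ P, ∃ q ∈ Q, p ≤ q

/-- A filter on a Boolean algebra. -/
def IsBFilter [BooleanAlgebra B] (F : Set B) : Prop :=
  ⊥ ∉ F ∧ ⊤ ∈ F ∧ (∀ a ∈ F, ∀ b : B, a ≤ b → b ∈ F) ∧ ∀ a ∈ F, ∀ b ∈ F, a ⊓ b ∈ F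

/-- An ultrafilter on a Boolean algebra. -/
def IsBUltrafilter [BooleanAlgebra B] (U : Set B) : Prop :=
  IsBFilter U ∧ ∀ b : B, b ∈ U ∨ bᶜ ∈ U

/-- The countable chain condition: every set of pairwise disjoint
nonzero elements is countable. -/
def BCCC (B : Type*) [BooleanAlgebra B] : Prop :=
  ∀ S : Set B, ⊥ ∉ S → (S.Pairwise fun a b => a ⊓ b = ⊥) → S.Countable

/-- A filter on ℕ, presented as a family of subsets of ℕ. -/
def IsNFilter (V : Set (Set ℕ)) : Prop :=
  ∅ ∉ V ∧ Set.univ ∈ V ∧ (∀ A ∈ V, ∀ C : Set ℕ, A ⊆ C → C ∈ V) ∧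
    ∀ A ∈ V, ∀ C ∈ V, A ∩ C ∈ V

/-- An ultrafilter on ℕ, presented as a family of subsets of ℕ. -/
def IsNUltrafilter (V : Set (Set ℕ)) : Prop :=
  IsNFilter V ∧ ∀ A : Set ℕ, A ∈ V ∨ Aᶜ ∈ V

/-- A P-point on ℕ: an ultrafilter such that for every partition of ℕ into
sets not in the ultrafilter there is a member meeting each piece finitely. -/
def IsPPointFamily (V : Set (Set ℕ)) : Prop :=
  IsNUltrafilter V ∧ ∀ A : ℕ → Set ℕ, (Pairwise fun m n => A m ∩ A n = ∅) →
    (⋃ n, A n) = Set.univ → (∀ n, A n ∉ V) → ∃ S ∈ V, ∀ n, (S ∩ A n).Finite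

/-- A selective ultrafilter on ℕ: for every partition of ℕ into sets not in
the ultrafilter there is a member meeting each piece in at most one point. -/
def IsSelectiveFamily (V : Set (Set ℕ)) : Prop :=
  IsNUltrafilter V ∧ ∀ A : ℕ → Set ℕ, (Pairwise fun m n => A m ∩ A n = ∅) →
    (⋃ n, A n) = Set.univ → (∀ n, A n ∉ V) → ∃ S ∈ V, ∀ n, (S ∩ A n).Subsingleton

/-- A coherent P-ultrafilter: an ultrafilter whose trace on every countably
infinite partition is a P-point on ℕ. -/
def IsCoherentPUltrafilter [CompleteBooleanAlgebra B] (U : Set B) : Prop :=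
  IsBUltrafilter U ∧ ∀ p : ℕ → B, Function.Injective p → IsBPartition (Set.range p) →
    IsPPointFamily {A : Set ℕ | (⨆ n ∈ A, p n) ∈ U}

/-- A coherent selective ultrafilter: an ultrafilter whose trace on every
countably infinite partition is a selective ultrafilter on ℕ. -/
def IsCoherentSelectiveUltrafilter [CompleteBooleanAlgebra B] (U : Set B) : Prop :=
  IsBUltrafilter U ∧ ∀ p : ℕ → B, Function.Injective p → IsBPartition (Set.range p) →
    IsSelectiveFamily {A : Set ℕ | (⨆ n ∈ A, p n) ∈ U}

/-- Atomless: every nonzero element properly contains a nonzero element. -/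
def BAtomless (B : Type*) [BooleanAlgebra B] : Prop :=
  ∀ b : B, b ≠ ⊥ → ∃ c : B, c ≠ ⊥ ∧ c < b

private lemma inf_bot_iff_le_compl' [BooleanAlgebra B] {a b : B} :
    a ⊓ b = ⊥ ↔ a ≤ bᶜ := by
  rw [← disjoint_iff, ← le_compl_iff_disjoint_right]

private lemma exists_bsup [CompleteBooleanAlgebra B] {I : Type*} [Nonempty I]
    (P : I → Set B) (hP : ∀ α, IsBPartition (P α)) :
    ∃ S : Set B, IsBPartition S ∧ (∀ α, BRefines (P α) S) ∧
      ∀ R : Set B, IsBPartition R → (∀ α, BRefines (P α) R) → BRefines S R := by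
  classical
  set Sat : Set B := {c | ∀ α, ∀ q ∈ P α, q ⊓ c ≠ ⊥ → q ≤ c} with hSat
  set s : B → B := fun b => sInf {c | c ∈ Sat ∧ b ≤ c} with hs
  have hle : ∀ b : B, b ≤ s b := fun b => le_sInf fun c hc => hc.2
  have hmin : ∀ b c : B, c ∈ Sat → b ≤ c → s b ≤ c := fun b c hc hbc =>
    sInf_le ⟨hc, hbc⟩
  have hsat : ∀ b : B, s b ∈ Sat := by
    intro b α q hq hne
    apply le_sInf
    intro c hc
    apply hc.1 α q hq
    intro h0
    apply hne
    have : q ⊓ s b ≤ q ⊓ c := inf_le_inf_left q (sInf_le hc)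
    exact le_bot_iff.mp (h0 ▸ this)
  have hcompl : ∀ c ∈ Sat, cᶜ ∈ Sat := by
    intro c hc α q hq hne
    rcases eq_or_ne (q ⊓ c) ⊥ with h | h
    · exact inf_bot_iff_le_compl'.mp h
    · exact absurd (le_bot_iff.mp ((inf_le_inf_right cᶜ (hc α q hq h)).trans
        (le_of_eq inf_compl_eq_bot))) hne
  obtain ⟨α₀⟩ := ‹Nonempty I›
  have hP0 := hP α₀
  -- key: for p q ∈ P α₀, if s p meets s q then s p = s q
  have hkey : ∀ p ∈ P α₀, ∀ q ∈ P α₀, s p ⊓ s q ≠ ⊥ → s p ≤ s q := by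
    intro p hp q hq hne
    have hpq : p ⊓ s q ≠ ⊥ := by
      intro h0
      apply hne
      have : p ≤ (s q)ᶜ := inf_bot_iff_le_compl'.mp h0
      have : s p ≤ (s q)ᶜ := hmin _ _ (hcompl _ (hsat q)) this
      exact inf_bot_iff_le_compl'.mpr this
    exact hmin _ _ (hsat q) (hsat q α₀ p hp hpq)
  refine ⟨s '' P α₀, ⟨?_, ?_, ?_⟩, ?_, ?_⟩
  · rintro ⟨p, hp, h0⟩
    exact hP0.1 (le_bot_iff.mp (h0 ▸ hle p) ▸ hp)
  · rintro _ ⟨p, hp, rfl⟩ _ ⟨q, hq, rfl⟩ hne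
    by_contra h0
    exact hne (le_antisymm (hkey p hp q hq h0)
      (hkey q hq p hp (by rwa [inf_comm] at h0)))
  · intro b hb
    obtain ⟨p, hp, hbp⟩ := hP0.2.2 b hb
    refine ⟨s p, ⟨p, hp, rfl⟩, fun h0 => hbp ?_⟩
    exact le_bot_iff.mp (h0 ▸ inf_le_inf_left b (hle p))
  · intro α p hp
    obtain ⟨q, hq, hpq⟩ := hP0.2.2 p (fun h => (hP α).1 (h ▸ hp))
    exact ⟨s q, ⟨q, hq, rfl⟩, hsat q α p hp
      (fun h0 => hpq (le_bot_iff.mp (h0 ▸ inf_le_inf_left p (hle q))))⟩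
  · intro R hR hRref
    rintro _ ⟨p, hp, rfl⟩
    obtain ⟨r, hr, hpr⟩ := hRref α₀ p hp
    have hrSat : r ∈ Sat := by
      intro α q hq hne
      obtain ⟨r', hr', hqr'⟩ := hRref α q hq
      rcases eq_or_ne r' r with rfl | hne'
      · exact hqr'
      · exact absurd (le_bot_iff.mp ((inf_le_inf_right r hqr').trans
          (hR.2.1 hr' hr hne').le)) hne
    exact ⟨r, hr, hmin _ _ hrSat hpr⟩

/-- Every nonempty family of partitions of a complete Boolean algebra has
a supremum in the refinement order; in particular the partitions of `B`
ordered by refinement form a lattice. -/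
theorem partitions_have_suprema [CompleteBooleanAlgebra B] {I : Type*} [Nonempty I]
    (P : I → Set B) (hP : ∀ α, IsBPartition (P α)) :
    (∃ S : Set B, IsBPartition S ∧ (∀ α, BRefines (P α) S) ∧
      ∀ R : Set B, IsBPartition R → (∀ α, BRefines (P α) R) → BRefines S R) ∧
    ∀ P₁ P₂ : Set B, IsBPartition P₁ → IsBPartition P₂ →
      (∃ M : Set B, IsBPartition M ∧ BRefines M P₁ ∧ BRefines M P₂ ∧
        ∀ R : Set B, IsBPartition R → BRefines R P₁ → BRefines R P₂ → BRefines R M) ∧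
      (∃ S : Set B, IsBPartition S ∧ BRefines P₁ S ∧ BRefines P₂ S ∧
        ∀ R : Set B, IsBPartition R → BRefines P₁ R → BRefines P₂ R → BRefines S R) := by
  refine ⟨exists_bsup P hP, fun P₁ P₂ h₁ h₂ => ⟨?_, ?_⟩⟩
  · -- meet: common refinement
    refine ⟨{m | (∃ p ∈ P₁, ∃ q ∈ P₂, m = p ⊓ q) ∧ m ≠ ⊥}, ⟨?_, ?_, ?_⟩, ?_, ?_, ?_⟩
    · exact fun h => h.2 rfl
    · rintro _ ⟨⟨p, hp, q, hq, rfl⟩, -⟩ _ ⟨⟨p', hp', q', hq', rfl⟩, -⟩ hne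
      rcases eq_or_ne p p' with rfl | hpp
      · rcases eq_or_ne q q' with rfl | hqq
        · exact absurd rfl hne
        · exact le_bot_iff.mp ((inf_le_inf inf_le_right inf_le_right).trans
            (h₂.2.1 hq hq' hqq).le)
      · exact le_bot_iff.mp ((inf_le_inf inf_le_left inf_le_left).trans
          (h₁.2.1 hp hp' hpp).le)
    · intro b hb
      obtain ⟨p, hp, hbp⟩ := h₁.2.2 b hb
      obtain ⟨q, hq, hbq⟩ := h₂.2.2 (b ⊓ p) hbp
      refine ⟨p ⊓ q, ⟨⟨p, hp, q, hq, rfl⟩, fun h0 => hbq ?_⟩, fun h0 => hbq ?_⟩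
      · exact le_bot_iff.mp (h0 ▸ inf_le_inf_right q inf_le_right)
      · rw [← inf_assoc] at h0; exact h0
    · rintro _ ⟨⟨p, hp, q, hq, rfl⟩, -⟩; exact ⟨p, hp, inf_le_left⟩
    · rintro _ ⟨⟨p, hp, q, hq, rfl⟩, -⟩; exact ⟨q, hq, inf_le_right⟩
    · intro R hR hR1 hR2 r hr
      obtain ⟨p, hp, hrp⟩ := hR1 r hr
      obtain ⟨q, hq, hrq⟩ := hR2 r hr
      have hrne : r ≠ ⊥ := fun h => hR.1 (h ▸ hr)
      refine ⟨p ⊓ q, ⟨⟨p, hp, q, hq, rfl⟩, fun h0 => hrne ?_⟩, le_inf hrp hrq⟩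
      exact le_bot_iff.mp (h0 ▸ le_inf hrp hrq)
  · -- join of two via exists_bsup with a Bool-indexed family
    obtain ⟨S, hS, href, hleast⟩ := exists_bsup (fun b : Bool => if b then P₁ else P₂)
      (fun b => by cases b <;> simpa)
    refine ⟨S, hS, by simpa using href true, by simpa using href false, ?_⟩
    intro R hR hR1 hR2
    exact hleast R hR (fun b => by cases b <;> simpa)
end

section
/- Let B be an infinite complete Boolean algebra. The set of partitions of B ordered by refinement is a complete lattice if and only if B is atomic (every nonzero element of B lies above an atom). -/
open Cardinal Filter

variable {B : Type*}

section Aux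

variable [CompleteBooleanAlgebra B]

lemma bpart_block_unique {P : Set B} (hP : IsBPartition P) {a : B} (ha : IsAtom a) :
    ∃! p, p ∈ P ∧ a ≤ p := by
  obtain ⟨p, hp, hap⟩ := hP.2.2 a ha.1
  have hle : a ≤ p := by
    rcases lt_or_eq_of_le (inf_le_left : a ⊓ p ≤ a) with h | h
    · exact absurd (ha.2 _ h) hap
    · exact h ▸ inf_le_right
  refine ⟨p, ⟨hp, hle⟩, ?_⟩
  rintro q ⟨hq, haq⟩
  by_contra hne
  exact ha.1 (le_bot_iff.mp ((le_inf haq hle).trans_eq (hP.2.1 hq hp hne)))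

lemma bpart_exists_inf [Nontrivial B] (hA : IsAtomic B) (𝒮 : Set (Set B))
    (h𝒮 : ∀ P ∈ 𝒮, IsBPartition P) :
    ∃ M : Set B, IsBPartition M ∧ (∀ P ∈ 𝒮, BRefines M P) ∧
      ∀ R : Set B, IsBPartition R → (∀ P ∈ 𝒮, BRefines R P) → BRefines R M := by
  classical
  set blk : B → Set B → B := fun a P => sSup {p | p ∈ P ∧ a ≤ p} with hblkdef
  have hblk : ∀ {P : Set B} {a : B}, P ∈ 𝒮 → IsAtom a →
      blk a P ∈ P ∧ a ≤ blk a P ∧ ∀ q ∈ P, a ≤ q → q = blk a P := by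
    intro P a hP ha
    obtain ⟨p, ⟨hpP, hap⟩, huniq⟩ := bpart_block_unique (h𝒮 P hP) ha
    have hset : {p' | p' ∈ P ∧ a ≤ p'} = {p} := by
      ext q
      constructor
      · intro hq; exact huniq q hq
      · rintro rfl; exact ⟨hpP, hap⟩
    have hb : blk a P = p := by rw [hblkdef]; simp [hset]
    rw [hb]
    exact ⟨hpP, hap, fun q hq haq => huniq q ⟨hq, haq⟩⟩
  set m : B → B := fun a => ⨅ P ∈ 𝒮, blk a P with hmdef
  have hm_ge : ∀ {a : B}, IsAtom a → a ≤ m a := by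
    intro a ha
    exact le_iInf₂ fun P hP => (hblk hP ha).2.1
  refine ⟨{x | ∃ a : B, IsAtom a ∧ x = m a}, ⟨?_, ?_, ?_⟩, ?_, ?_⟩
  · rintro ⟨a, ha, hbot⟩
    exact ha.1 (le_bot_iff.mp (hbot ▸ hm_ge ha))
  · rintro x ⟨a, ha, rfl⟩ y ⟨b, hb, rfl⟩ hxy
    have : ∃ P ∈ 𝒮, blk a P ≠ blk b P := by
      by_contra hcon
      push_neg at hcon
      exact hxy (iInf_congr fun P => iInf_congr fun hP => hcon P hP)
    obtain ⟨P, hP, hne⟩ := this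
    have h1 : m a ≤ blk a P := iInf₂_le P hP
    have h2 : m b ≤ blk b P := iInf₂_le P hP
    have := (h𝒮 P hP).2.1 (hblk hP ha).1 (hblk hP hb).1 hne
    exact le_bot_iff.mp ((inf_le_inf h1 h2).trans_eq this)
  · intro b hb
    obtain ⟨a, ha, hab⟩ := (hA.eq_bot_or_exists_atom_le b).resolve_left hb
    refine ⟨m a, ⟨a, ha, rfl⟩, fun h => ha.1 ?_⟩
    exact le_bot_iff.mp (h ▸ le_inf hab (hm_ge ha))
  · rintro P hP x ⟨a, ha, rfl⟩
    exact ⟨blk a P, (hblk hP ha).1, iInf₂_le P hP⟩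
  · intro R hR hRref r hr
    have hrne : r ≠ ⊥ := fun h => hR.1 (h ▸ hr)
    obtain ⟨a, ha, har⟩ := (hA.eq_bot_or_exists_atom_le r).resolve_left hrne
    refine ⟨m a, ⟨a, ha, rfl⟩, le_iInf₂ fun P hP => ?_⟩
    obtain ⟨q, hq, hrq⟩ := hRref P hP r hr
    exact ((hblk hP ha).2.2 q hq (har.trans hrq)) ▸ hrq

end Aux

/-- For an infinite complete Boolean algebra, the refinement order on
partitions is a complete lattice (every family of partitions has an
infimum and a supremum) iff the algebra is atomic. -/
theorem partitions_complete_lattice_iff_atomic [CompleteBooleanAlgebra B] [Infinite B] :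
    (∀ 𝒮 : Set (Set B), (∀ P ∈ 𝒮, IsBPartition P) →
      (∃ M : Set B, IsBPartition M ∧ (∀ P ∈ 𝒮, BRefines M P) ∧
        ∀ R : Set B, IsBPartition R → (∀ P ∈ 𝒮, BRefines R P) → BRefines R M) ∧
      (∃ T : Set B, IsBPartition T ∧ (∀ P ∈ 𝒮, BRefines P T) ∧
        ∀ R : Set B, IsBPartition R → (∀ P ∈ 𝒮, BRefines P R) → BRefines T R)) ↔
    IsAtomic B := by
  constructor
  · intro h
    obtain ⟨⟨M, hM, hMref, -⟩, -⟩ := h {P | IsBPartition P} (fun _ hP => hP)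
    constructor
    intro b
    by_cases hb : b = ⊥
    · exact Or.inl hb
    obtain ⟨p, hp, hbp⟩ := hM.2.2 b hb
    have hpbot : p ≠ ⊥ := fun h => hM.1 (h ▸ hp)
    have hatom : IsAtom p := by
      refine ⟨hpbot, fun c hc => ?_⟩
      by_contra hc0
      have hQ : IsBPartition {c, cᶜ} := by
        refine ⟨?_, ?_, ?_⟩
        · rintro (h | h)
          · exact hc0 h.symm
          · have hct : c = ⊤ := compl_eq_bot.mp h.symm
            exact not_top_lt (hct ▸ hc)
        · rintro x (rfl | rfl) y (rfl | rfl) hxy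
          · exact absurd rfl hxy
          · exact inf_compl_eq_bot
          · exact compl_inf_eq_bot
          · exact absurd rfl hxy
        · intro d hd
          by_cases h1 : d ⊓ c = ⊥
          · refine ⟨cᶜ, Or.inr rfl, fun h2 => hd ?_⟩
            have : d ⊓ (c ⊔ cᶜ) = ⊥ := by rw [inf_sup_left, h1, h2, sup_idem]
            simpa using this
          · exact ⟨c, Or.inl rfl, h1⟩
      obtain ⟨q, hq, hpq⟩ := hMref {c, cᶜ} hQ p hp
      rcases hq with rfl | rfl
      · exact absurd (hc.trans_le hpq) (lt_irrefl q)
      · have : c ≤ ⊥ := (le_inf le_rfl (hc.le.trans hpq)).trans_eq inf_compl_eq_bot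
        exact hc0 (le_bot_iff.mp this)
    have hple : p ≤ b := by
      rcases lt_or_eq_of_le (inf_le_right : b ⊓ p ≤ p) with h | h
      · exact absurd (hatom.2 _ h) hbp
      · exact inf_eq_right.mp h
    exact Or.inr ⟨p, hatom, hple⟩
  · intro hA 𝒮 h𝒮
    constructor
    · exact bpart_exists_inf hA 𝒮 h𝒮
    · obtain ⟨T, hT, hT1, hT2⟩ := bpart_exists_inf hA
        {R | IsBPartition R ∧ ∀ P ∈ 𝒮, BRefines P R} (fun R hR => hR.1)
      refine ⟨T, hT, fun P hP => ?_, fun R hR h => hT1 R ⟨hR, h⟩⟩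
      exact hT2 P (h𝒮 P hP) (fun Q hQ => hQ.2 P hP)
end

section
/- Let B be an atomless Boolean algebra containing a countably infinite set of pairwise disjoint nonzero elements {a_n : n ∈ ℕ} that has no supremum in B. Then there exist partitions P and Q of B such that the pair {P, Q} has no supremum in the refinement order: for every partition R with P ⪯ R and Q ⪯ R there is a partition R₀ ≠ R with P ⪯ R₀, Q ⪯ R₀ and R₀ ⪯ R. -/
open Cardinal Filter

variable {B : Type*}

/-!
Extend `{aₙ}` to a partition `T` and let `W = T \ {aₙ}`. Pairing the `aₙ` as
`{a₀ ⊔ a₁, a₂ ⊔ a₃, …}` and as `{a₀, a₁ ⊔ a₂, a₃ ⊔ a₄, …}` and adding `W` gives two partitions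
`P` and `Q`. A common coarsening `R` of `P` and `Q` has to put consecutive `aₙ` into one block,
so a single block `r` of `R` bounds every `aₙ`. As `r` is not the supremum, some `w ∈ W` meets
`r`, hence lies strictly below it, and splitting `r` into `w` and `r \ w` gives a strictly finer
common coarsening.
-/

open Set Function

section Partitions

variable [BooleanAlgebra B] {P R T : Set B}

theorem isBPartition_iff :
    IsBPartition P ↔ ⊥ ∉ P ∧ P.Pairwise Disjoint ∧ ∀ b : B, b ≠ ⊥ → ∃ p ∈ P, ¬Disjoint b p := by
  simp only [IsBPartition, Set.Pairwise, disjoint_iff]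

namespace IsBPartition

theorem ne_bot (hP : IsBPartition P) {p : B} (hp : p ∈ P) : p ≠ ⊥ :=
  fun h => hP.1 (h ▸ hp)

theorem pairwise_disjoint (hP : IsBPartition P) : P.Pairwise Disjoint :=
  (isBPartition_iff.1 hP).2.1

theorem disjoint (hP : IsBPartition P) {p q : B} (hp : p ∈ P) (hq : q ∈ P) (hpq : p ≠ q) :
    Disjoint p q :=
  hP.pairwise_disjoint hp hq hpq

theorem exists_not_disjoint (hP : IsBPartition P) {b : B} (hb : b ≠ ⊥) :
    ∃ p ∈ P, ¬Disjoint b p :=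
  (isBPartition_iff.1 hP).2.2 b hb

theorem eq_of_not_disjoint (hP : IsBPartition P) {p q : B} (hp : p ∈ P) (hq : q ∈ P)
    (h : ¬Disjoint p q) : p = q :=
  by_contra fun hpq => h (hP.disjoint hp hq hpq)

theorem of_refines (hT : IsBPartition T) (hTP : BRefines T P) (hbot : ⊥ ∉ P)
    (hP : P.Pairwise Disjoint) : IsBPartition P := by
  refine isBPartition_iff.2 ⟨hbot, hP, fun b hb => ?_⟩
  obtain ⟨t, ht, hbt⟩ := hT.exists_not_disjoint hb
  obtain ⟨p, hp, htp⟩ := hTP t ht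
  exact ⟨p, hp, fun h => hbt (h.mono_right htp)⟩

end IsBPartition

theorem exists_isBPartition_superset {S : Set B} (hbot : ⊥ ∉ S) (hS : S.Pairwise Disjoint) :
    ∃ T, S ⊆ T ∧ IsBPartition T := by
  obtain ⟨T, hST, hT⟩ := zorn_subset_nonempty {T : Set B | ⊥ ∉ T ∧ T.Pairwise Disjoint}
    (fun c hc hchain _ => ⟨⋃₀ c,
      ⟨fun ⟨t, ht, hbt⟩ => (hc ht).1 hbt,
        (pairwise_sUnion hchain.directedOn).2 fun t ht => (hc ht).2⟩,
      fun _ => subset_sUnion_of_mem⟩) S ⟨hbot, hS⟩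
  refine ⟨T, hST, isBPartition_iff.2 ⟨hT.prop.1, hT.prop.2, fun b hb => ?_⟩⟩
  by_contra! h
  have hbT : b ∈ T := hT.2
    ⟨by rintro (hb' | hbT); exacts [hb hb'.symm, hT.prop.1 hbT], hT.prop.2.insert_of_symm
      fun p hp _ => h p hp⟩ (subset_insert b T) (mem_insert b T)
  exact hb (disjoint_self.1 (h b hbT))

theorem IsBPartition.exists_forall_le_of_chain (hR : IsBPartition R) {x : ℕ → B}
    (hx : ∀ n, x n ≠ ⊥) (hchain : ∀ n, ∃ s ∈ R, x n ≤ s ∧ x (n + 1) ≤ s) :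
    ∃ r ∈ R, ∀ n, x n ≤ r := by
  obtain ⟨r, hr, h0, -⟩ := hchain 0
  refine ⟨r, hr, fun n => ?_⟩
  induction n with
  | zero => exact h0
  | succ n ih =>
    obtain ⟨s, hs, hns, hsucc⟩ := hchain n
    have hsr : s = r :=
      hR.eq_of_not_disjoint hs hr fun h => hx n (disjoint_self.1 (h.mono hns ih))
    exact hsr ▸ hsucc

theorem IsBPartition.exists_mem_diff_not_disjoint_of_not_isLUB (hT : IsBPartition T)
    {S : Set B} {r : B} (hr : r ∈ upperBounds S) (hnot : ¬IsLUB S r) :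
    ∃ t ∈ T \ S, ¬Disjoint t r := by
  obtain ⟨u, hu, hru⟩ : ∃ u ∈ upperBounds S, ¬r ≤ u := by
    simpa [IsLUB, IsLeast, hr, lowerBounds] using hnot
  obtain ⟨t, ht, hdt⟩ := hT.exists_not_disjoint fun h => hru (sdiff_eq_bot_iff.1 h)
  exact ⟨t, ⟨ht, fun htS => hdt (disjoint_sdiff_self_left.mono_right (hu htS))⟩,
    fun h => hdt (h.symm.mono_left sdiff_le)⟩

end Partitions

section Merging

variable [BooleanAlgebra B] {ι κ : Type*} {T R : Set B} {a : ι → B} {I : κ → Finset ι}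

def mergeBlocks (T : Set B) (a : ι → B) (I : κ → Finset ι) : Set B :=
  range (fun k => (I k).sup a) ∪ (T \ range a)

theorem IsBPartition.mergeBlocks (hT : IsBPartition T) (haT : range a ⊆ T)
    (ha : Pairwise (Disjoint on a)) (hI : Pairwise (Disjoint on I))
    (hIne : ∀ k, (I k).Nonempty) (hcover : ∀ i, ∃ k, i ∈ I k) :
    IsBPartition (mergeBlocks T a I) := by
  have hblocks : Pairwise (Disjoint on fun k => (I k).sup a) := fun k l hkl =>
    Finset.disjoint_sup_left.2 fun i hi => Finset.disjoint_sup_right.2 fun j hj =>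
      ha fun hij => Finset.disjoint_left.1 (hI hkl) hi (hij ▸ hj)
  refine hT.of_refines (fun t ht => ?_) ?_ ?_
  · by_cases hta : t ∈ range a
    · obtain ⟨i, rfl⟩ := hta
      obtain ⟨k, hk⟩ := hcover i
      exact ⟨_, Or.inl ⟨k, rfl⟩, Finset.le_sup hk⟩
    · exact ⟨t, Or.inr ⟨ht, hta⟩, le_rfl⟩
  · rintro (⟨k, hk⟩ | ⟨hbT, -⟩)
    · obtain ⟨i, hi⟩ := hIne k
      exact hT.ne_bot (haT ⟨i, rfl⟩) (le_bot_iff.1 (hk ▸ Finset.le_sup hi))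
    · exact hT.1 hbT
  · refine pairwise_union_of_symm.2 ⟨hblocks.range_pairwise,
      hT.pairwise_disjoint.mono sdiff_subset, ?_⟩
    rintro _ ⟨k, rfl⟩ t ⟨ht, hta⟩ -
    exact Finset.disjoint_sup_left.2 fun i _ =>
      hT.disjoint (haT ⟨i, rfl⟩) ht fun h => hta ⟨i, h⟩

theorem BRefines.exists_le_of_mem_mergeBlocks (h : BRefines (mergeBlocks T a I) R) {k : κ}
    {i j : ι} (hi : i ∈ I k) (hj : j ∈ I k) : ∃ s ∈ R, a i ≤ s ∧ a j ≤ s := by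
  obtain ⟨s, hs, hks⟩ := h _ (Or.inl ⟨k, rfl⟩)
  exact ⟨s, hs, (Finset.le_sup hi).trans hks, (Finset.le_sup hj).trans hks⟩

end Merging

def pairBlocks (k : ℕ) : Finset ℕ := {2 * k, 2 * k + 1}

def shiftedPairBlocks : ℕ → Finset ℕ
  | 0 => {0}
  | k + 1 => {2 * k + 1, 2 * k + 2}

theorem pairwise_disjoint_pairBlocks : Pairwise (Disjoint on pairBlocks) := by
  intro k l hkl
  simp only [Function.onFun, pairBlocks, Finset.disjoint_insert_left,
    Finset.disjoint_singleton_left, Finset.mem_insert, Finset.mem_singleton]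
  omega

theorem pairwise_disjoint_shiftedPairBlocks : Pairwise (Disjoint on shiftedPairBlocks) := by
  rintro (_ | k) (_ | l) hkl <;>
    simp only [Function.onFun, shiftedPairBlocks, Finset.disjoint_insert_left,
      Finset.disjoint_insert_right, Finset.disjoint_singleton_left, Finset.mem_insert,
      Finset.mem_singleton] <;> omega

theorem pairBlocks_nonempty (k : ℕ) : (pairBlocks k).Nonempty := Finset.insert_nonempty _ _

theorem shiftedPairBlocks_nonempty : ∀ k, (shiftedPairBlocks k).Nonempty
  | 0 => Finset.singleton_nonempty _
  | _ + 1 => Finset.insert_nonempty _ _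

theorem exists_mem_pairBlocks (n : ℕ) : ∃ k, n ∈ pairBlocks k :=
  ⟨n / 2, by simp only [pairBlocks, Finset.mem_insert, Finset.mem_singleton]; omega⟩

theorem exists_mem_shiftedPairBlocks (n : ℕ) : ∃ k, n ∈ shiftedPairBlocks k := by
  rcases n with _ | n
  · exact ⟨0, Finset.mem_singleton_self 0⟩
  · exact ⟨n / 2 + 1, by
      simp only [shiftedPairBlocks, Finset.mem_insert, Finset.mem_singleton]; omega⟩

theorem exists_succ_mem_pairBlocks_or_shiftedPairBlocks (n : ℕ) :
    (∃ k, n ∈ pairBlocks k ∧ n + 1 ∈ pairBlocks k) ∨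
      ∃ k, n ∈ shiftedPairBlocks k ∧ n + 1 ∈ shiftedPairBlocks k := by
  rcases Nat.even_or_odd' n with ⟨k, rfl | rfl⟩
  · exact Or.inl ⟨k, by simp [pairBlocks]⟩
  · exact Or.inr ⟨k + 1, by simp [shiftedPairBlocks]⟩

section Splitting

variable [BooleanAlgebra B] {P R : Set B} {r c : B}

def splitBlock (R : Set B) (r c : B) : Set B := insert c (insert (r \ c) (R \ {r}))

theorem IsBPartition.splitBlock (hR : IsBPartition R) (hr : r ∈ R) (hc : c ≠ ⊥) (hcr : c < r) :
    IsBPartition (splitBlock R r c) := by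
  have hdisj : ∀ s ∈ R \ {r}, Disjoint r s := fun s hs => hR.disjoint hr hs.1 (Ne.symm hs.2)
  refine isBPartition_iff.2 ⟨?_, ?_, fun b hb => ?_⟩
  · rintro (h | h | ⟨h, -⟩)
    · exact hc h.symm
    · exact hcr.not_ge (sdiff_eq_bot_iff.1 h.symm)
    · exact hR.1 h
  · refine ((hR.pairwise_disjoint.mono sdiff_subset).insert_of_symm
      fun s hs _ => (hdisj s hs).mono_left sdiff_le).insert_of_symm ?_
    rintro s (rfl | hs) -
    exacts [disjoint_sdiff_self_right, (hdisj s hs).mono_left hcr.le]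
  obtain ⟨s, hs, hbs⟩ := hR.exists_not_disjoint hb
  by_cases hsr : s = r
  · subst hsr
    by_cases hbc : Disjoint b c
    · refine ⟨s \ c, mem_insert_of_mem _ (mem_insert _ _), fun hbsc => hbs ?_⟩
      rw [← sup_sdiff_cancel_right hcr.le]
      exact disjoint_sup_right.2 ⟨hbc, hbsc⟩
    · exact ⟨c, mem_insert _ _, hbc⟩
  · exact ⟨s, mem_insert_of_mem _ (mem_insert_of_mem _ ⟨hs, hsr⟩), hbs⟩

theorem splitBlock_ne (hr : r ∈ R) (hc : c ≠ ⊥) (hcr : c < r) : splitBlock R r c ≠ R := by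
  intro h
  rcases h ▸ hr with h | h | ⟨-, h⟩
  · exact hcr.ne h.symm
  · exact hc ((sdiff_eq_self_iff_disjoint.1 h.symm).eq_bot_of_le hcr.le)
  · exact h rfl

theorem BRefines.splitBlock (hP : P.Pairwise Disjoint) (hPR : BRefines P R) (hc : c ∈ P) :
    BRefines P (splitBlock R r c) := by
  intro p hp
  obtain ⟨s, hs, hps⟩ := hPR p hp
  by_cases hsr : s = r
  · subst hsr
    by_cases hpc : p = c
    · exact ⟨c, mem_insert _ _, hpc.le⟩
    · exact ⟨s \ c, mem_insert_of_mem _ (mem_insert _ _), le_sdiff.2 ⟨hps, hP hp hc hpc⟩⟩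
  · exact ⟨s, mem_insert_of_mem _ (mem_insert_of_mem _ ⟨hs, hsr⟩), hps⟩

theorem splitBlock_refines (hr : r ∈ R) (hcr : c ≤ r) : BRefines (splitBlock R r c) R := by
  rintro s (rfl | rfl | ⟨hs, -⟩)
  exacts [⟨r, hr, hcr⟩, ⟨r, hr, sdiff_le⟩, ⟨s, hs, le_rfl⟩]

end Splitting

theorem no_supremum_of_partitions_general [BooleanAlgebra B]
    (a : ℕ → B) (hne : ∀ n, a n ≠ ⊥)
    (hdis : Pairwise fun m n => a m ⊓ a n = ⊥)
    (hnosup : ¬∃ s : B, IsLUB (Set.range a) s) :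
    ∃ P Q : Set B, IsBPartition P ∧ IsBPartition Q ∧
      ∀ R : Set B, IsBPartition R → BRefines P R → BRefines Q R →
        ∃ R₀ : Set B, IsBPartition R₀ ∧ R₀ ≠ R ∧
          BRefines P R₀ ∧ BRefines Q R₀ ∧ BRefines R₀ R := by
  have ha : Pairwise (Disjoint on a) := fun m n h => disjoint_iff.2 (hdis h)
  obtain ⟨T, haT, hT⟩ := exists_isBPartition_superset (by rintro ⟨n, hn⟩; exact hne n hn)
    ha.range_pairwise
  have hP := hT.mergeBlocks haT ha pairwise_disjoint_pairBlocks pairBlocks_nonempty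
    exists_mem_pairBlocks
  have hQ := hT.mergeBlocks haT ha pairwise_disjoint_shiftedPairBlocks
    shiftedPairBlocks_nonempty exists_mem_shiftedPairBlocks
  refine ⟨_, _, hP, hQ, fun R hR hPR hQR => ?_⟩
  obtain ⟨r, hr, har⟩ := hR.exists_forall_le_of_chain hne fun n =>
    (exists_succ_mem_pairBlocks_or_shiftedPairBlocks n).elim
      (fun ⟨_, hn, hsucc⟩ => hPR.exists_le_of_mem_mergeBlocks hn hsucc)
      (fun ⟨_, hn, hsucc⟩ => hQR.exists_le_of_mem_mergeBlocks hn hsucc)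
  obtain ⟨t, htW, htr⟩ := hT.exists_mem_diff_not_disjoint_of_not_isLUB
    (forall_mem_range.2 har) fun h => hnosup ⟨r, h⟩
  obtain ⟨s, hs, hts⟩ := hPR t (Or.inr htW)
  have hsr : s = r := hR.eq_of_not_disjoint hs hr fun h => htr (h.mono_left hts)
  have htlt : t < r := lt_of_le_of_ne (hsr ▸ hts) fun h =>
    hne 0 ((hT.disjoint (haT ⟨0, rfl⟩) htW.1 fun h0 => htW.2 ⟨0, h0⟩).eq_bot_of_le (h ▸ har 0))
  exact ⟨splitBlock R r t, hR.splitBlock hr (hT.ne_bot htW.1) htlt,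
    splitBlock_ne hr (hT.ne_bot htW.1) htlt, hPR.splitBlock hP.pairwise_disjoint (Or.inr htW),
    hQR.splitBlock hQ.pairwise_disjoint (Or.inr htW), splitBlock_refines hr htlt.le⟩

/-- In an atomless Boolean algebra with a countable disjoint family having
no supremum, there are two partitions with no supremum in the refinement
order. -/
theorem no_supremum_of_partitions [BooleanAlgebra B] (hat : BAtomless B)
    (a : ℕ → B) (hinj : Function.Injective a) (hne : ∀ n, a n ≠ ⊥)
    (hdis : Pairwise fun m n => a m ⊓ a n = ⊥)
    (hnosup : ¬∃ s : B, IsLUB (Set.range a) s) :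
    ∃ P Q : Set B, IsBPartition P ∧ IsBPartition Q ∧
      ∀ R : Set B, IsBPartition R → BRefines P R → BRefines Q R →
        ∃ R₀ : Set B, IsBPartition R₀ ∧ R₀ ≠ R ∧
          BRefines P R₀ ∧ BRefines Q R₀ ∧ BRefines R₀ R :=
  no_supremum_of_partitions_general a hne hdis hnosup
end

section
/- Let B be a complete atomless ccc Boolean algebra and U an ultrafilter on B. Then the set D = {P : P is a partition of B and P ∩ U = ∅} is open and dense in the refinement order on partitions: (density) for every partition Q of B there is a partition P ∈ D with P ⪯ Q, and (openness) if P ∈ D and P' ⪯ P then P' ∈ D. -/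
open Cardinal Filter

variable {B : Type*}

lemma avoid_antichain [CompleteBooleanAlgebra B] (hat : BAtomless B)
    {U : Set B} (hU : IsBUltrafilter U) (q : B) (hq : q ≠ ⊥) :
    ∃ A : Set B, (∀ a ∈ A, a ≤ q) ∧ ⊥ ∉ A ∧ (A.Pairwise fun a b => a ⊓ b = ⊥) ∧
      A ∩ U = ∅ ∧ ∀ b : B, b ≠ ⊥ → b ≤ q → ∃ a ∈ A, b ⊓ a ≠ ⊥ := by
  classical
  set S : Set (Set B) := {A : Set B | (∀ a ∈ A, a ≤ q) ∧ ⊥ ∉ A ∧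
    (A.Pairwise fun a b => a ⊓ b = ⊥) ∧ A ∩ U = ∅} with hS
  obtain ⟨A, hA⟩ : ∃ m, Maximal (· ∈ S) m := by
    apply zorn_subset
    intro c hcS hchain
    refine ⟨⋃₀ c, ⟨?_, ?_, ?_, ?_⟩, fun s hs => Set.subset_sUnion_of_mem hs⟩
    · rintro a ⟨t, ht, hat'⟩
      exact (hcS ht).1 a hat'
    · rintro ⟨t, ht, hbt⟩
      exact (hcS ht).2.1 hbt
    · rintro a ⟨t, ht, hat'⟩ b ⟨t', ht', hbt'⟩ hab
      rcases hchain.total ht ht' with h | h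
      · exact (hcS ht').2.2.1 (h hat') hbt' hab
      · exact (hcS ht).2.2.1 hat' (h hbt') hab
    · rw [Set.eq_empty_iff_forall_notMem]
      rintro x ⟨⟨t, ht, hxt⟩, hxU⟩
      have := (hcS ht).2.2.2
      rw [Set.eq_empty_iff_forall_notMem] at this
      exact this x ⟨hxt, hxU⟩
  have hAmem := hA.1
  obtain ⟨hle, hbot, hpw, hAU⟩ := hAmem
  -- every nonzero element below the residue is in U
  have key : ∀ c : B, c ≠ ⊥ → c ≤ q → c ⊓ sSup A = ⊥ → c ∈ U := by
    intro c hc hcq hcd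
    by_contra hcU
    have hmemS : insert c A ∈ S := by
      refine ⟨?_, ?_, ?_, ?_⟩
      · rintro a (rfl | ha)
        · exact hcq
        · exact hle a ha
      · rintro (h | h)
        · exact hc h.symm
        · exact hbot h
      · apply hpw.insert
        intro b hb _
        have hdb : c ⊓ b = ⊥ := by
          have : c ⊓ b ≤ c ⊓ sSup A := inf_le_inf_left c (le_sSup hb)
          exact le_bot_iff.mp (hcd ▸ this)
        exact ⟨hdb, by rwa [inf_comm] at hdb⟩
      · rw [Set.eq_empty_iff_forall_notMem]
        rintro x ⟨(rfl | hxA), hxU⟩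
        · exact hcU hxU
        · rw [Set.eq_empty_iff_forall_notMem] at hAU
          exact hAU x ⟨hxA, hxU⟩
    have : insert c A ⊆ A := hA.2 hmemS (Set.subset_insert c A)
    have hcA : c ∈ A := this (Set.mem_insert c A)
    have : c ≤ c ⊓ sSup A := le_inf le_rfl (le_sSup hcA)
    exact hc (le_bot_iff.mp (hcd ▸ this))
  -- residue is bottom
  have hres : q ⊓ (sSup A)ᶜ = ⊥ := by
    by_contra hr
    set r := q ⊓ (sSup A)ᶜ with hrdef
    obtain ⟨c, hc, hcr⟩ := hat r hr
    have hrd : r ⊓ sSup A = ⊥ := by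
      rw [hrdef, inf_assoc, compl_inf_eq_bot, inf_bot_eq]
    have hcU : c ∈ U := key c hc (le_trans hcr.le inf_le_left)
      (le_bot_iff.mp (hrd ▸ inf_le_inf_right _ hcr.le))
    have hrc : r ⊓ cᶜ ≠ ⊥ := by
      intro h
      exact hcr.ne ((le_antisymm hcr.le (by rwa [← sdiff_eq, sdiff_eq_bot_iff] at h)))
    have hrcU : r ⊓ cᶜ ∈ U := key _ hrc (le_trans inf_le_left inf_le_left)
      (le_bot_iff.mp (hrd ▸ inf_le_inf_right _ inf_le_left))
    have : c ⊓ (r ⊓ cᶜ) ∈ U := hU.1.2.2.2 c hcU _ hrcU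
    have hbb : c ⊓ (r ⊓ cᶜ) = ⊥ := by
      rw [inf_comm, inf_assoc, compl_inf_eq_bot, inf_bot_eq]
    exact hU.1.1 (hbb ▸ this)
  have hqle : q ≤ sSup A := by
    rwa [← sdiff_eq, sdiff_eq_bot_iff] at hres
  refine ⟨A, hle, hbot, hpw, hAU, ?_⟩
  intro b hb hbq
  by_contra h
  push_neg at h
  have : b ⊓ sSup A = ⊥ := by
    rw [inf_sSup_eq]
    simp only [iSup_eq_bot]
    intro a ha
    simpa using h a ha
  exact hb (le_bot_iff.mp (this ▸ le_inf le_rfl (hbq.trans hqle)))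

/-- For an ultrafilter `U` on a complete atomless ccc Boolean algebra, the
partitions missing `U` form an open dense set in the refinement order. -/
theorem partitions_missing_ultrafilter_open_dense
    [CompleteBooleanAlgebra B] (hat : BAtomless B) (hcc : BCCC B)
    (U : Set B) (hU : IsBUltrafilter U) :
    (∀ Q : Set B, IsBPartition Q →
      ∃ P : Set B, IsBPartition P ∧ P ∩ U = ∅ ∧ BRefines P Q) ∧
    (∀ P P' : Set B, IsBPartition P → P ∩ U = ∅ →
      IsBPartition P' → BRefines P' P → P' ∩ U = ∅) := by
  constructor
  · intro Q hQ
    obtain ⟨hQbot, hQpw, hQmax⟩ := hQ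
    by_cases hQU : Q ∩ U = ∅
    · exact ⟨Q, ⟨hQbot, hQpw, hQmax⟩, hQU, fun p hp => ⟨p, hp, le_rfl⟩⟩
    · obtain ⟨q₀, hq₀Q, hq₀U⟩ := Set.nonempty_iff_ne_empty.mpr hQU
      have hq₀ : q₀ ≠ ⊥ := fun h => hQbot (h ▸ hq₀Q)
      obtain ⟨A, hle, hAbot, hApw, hAU, hAmax⟩ := avoid_antichain hat hU q₀ hq₀
      have huniq : ∀ q ∈ Q, q ∈ U → q = q₀ := by
        intro q hq hqU
        by_contra hne
        have : q ⊓ q₀ ∈ U := hU.1.2.2.2 q hqU q₀ hq₀U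
        rw [hQpw hq hq₀Q hne] at this
        exact hU.1.1 this
      refine ⟨(Q \ U) ∪ A, ⟨?_, ?_, ?_⟩, ?_, ?_⟩
      · rintro (⟨h, _⟩ | h)
        · exact hQbot h
        · exact hAbot h
      · have mixed : ∀ x ∈ Q \ U, ∀ y ∈ A, x ⊓ y = ⊥ := by
          rintro x ⟨hxQ, hxU⟩ y hyA
          have hxq₀ : x ≠ q₀ := fun h => hxU (h ▸ hq₀U)
          have : x ⊓ y ≤ x ⊓ q₀ := inf_le_inf_left x (hle y hyA)
          exact le_bot_iff.mp (hQpw hxQ hq₀Q hxq₀ ▸ this)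
        rintro x (hx | hx) y (hy | hy) hxy
        · exact hQpw hx.1 hy.1 hxy
        · exact mixed x hx y hy
        · rw [inf_comm]; exact mixed y hy x hx
        · exact hApw hx hy hxy
      · intro b hb
        obtain ⟨q, hq, hbq⟩ := hQmax b hb
        by_cases hqU : q ∈ U
        · have hqeq : q = q₀ := huniq q hq hqU
          subst hqeq
          obtain ⟨a, ha, hba⟩ := hAmax (b ⊓ q) hbq inf_le_right
          refine ⟨a, Or.inr ha, fun h => hba ?_⟩
          exact le_bot_iff.mp (h ▸ (inf_le_inf_right a inf_le_left))
        · exact ⟨q, Or.inl ⟨hq, hqU⟩, hbq⟩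
      · rw [Set.eq_empty_iff_forall_notMem]
        rintro x ⟨(hx | hx), hxU⟩
        · exact hx.2 hxU
        · rw [Set.eq_empty_iff_forall_notMem] at hAU
          exact hAU x ⟨hx, hxU⟩
      · rintro p (hp | hp)
        · exact ⟨p, hp.1, le_rfl⟩
        · exact ⟨q₀, hq₀Q, hle p hp⟩
  · intro P P' _ hPU _ href
    rw [Set.eq_empty_iff_forall_notMem] at hPU ⊢
    rintro x ⟨hxP', hxU⟩
    obtain ⟨p, hpP, hxp⟩ := href x hxP'
    exact hPU p ⟨hpP, hU.1.2.2.1 x hxU p hxp⟩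
end

section
/- Let B be a complete atomless ccc Boolean algebra and U an ultrafilter on B. Then for every b ∈ B there exists a partition P of B with P ∩ U = ∅ and a subset X ⊆ P such that b = ⨆X. In other words, B = ⋃{B_P : P a partition of B with P ∩ U = ∅}, where B_P = {⨆X : X ⊆ P}. -/
open Cardinal Filter

variable {B : Type*}

/-- Every element of a complete atomless ccc Boolean algebra is a supremum of
a subset of some partition missing a given ultrafilter `U`; i.e.
`B = ⋃ {B_P : P ∩ U = ∅}`. -/
theorem algebra_union_of_subalgebras_missing_ultrafilter
    [CompleteBooleanAlgebra B] (hat : BAtomless B) (hcc : BCCC B)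
    (U : Set B) (hU : IsBUltrafilter U) :
    ∀ b : B, ∃ P : Set B, IsBPartition P ∧ P ∩ U = ∅ ∧
      ∃ X ⊆ P, b = sSup X := by
  intro b
  set D : Set B := {p | p ≠ ⊥ ∧ p ∉ U ∧ (p ≤ b ∨ p ≤ bᶜ)} with hD
  have hdisjU : ∀ x ∈ U, ∀ y ∈ U, x ⊓ y ≠ ⊥ := by
    intro x hx y hy h
    exact hU.1.1 (h ▸ hU.1.2.2.2 x hx y hy)
  have split : ∀ c : B, c ≠ ⊥ → (c ≤ b ∨ c ≤ bᶜ) → ∃ d ∈ D, d ≤ c := by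
    intro c hc hcb
    by_cases hcU : c ∈ U
    · obtain ⟨e, he, helt⟩ := hat c hc
      have h2 : c ⊓ eᶜ ≠ ⊥ := by
        intro h
        have hle : c ≤ e := sdiff_eq_bot_iff.mp (by simpa [sdiff_eq] using h)
        exact absurd (le_antisymm helt.le hle) helt.ne
      have hle : ∀ x : B, x ≤ c → (x ≤ b ∨ x ≤ bᶜ) := by
        intro x hx; rcases hcb with h | h
        · exact Or.inl (hx.trans h)
        · exact Or.inr (hx.trans h)
      by_cases heU : e ∈ U
      · refine ⟨c ⊓ eᶜ, ⟨h2, fun hm => hdisjU e heU _ hm ?_, hle _ inf_le_left⟩, inf_le_left⟩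
        rw [inf_comm c, ← inf_assoc]
        simp
      · exact ⟨e, ⟨he, heU, hle _ helt.le⟩, helt.le⟩
    · exact ⟨c, ⟨hc, hcU, hcb⟩, le_rfl⟩
  obtain ⟨P, hP⟩ := zorn_subset {Q : Set B | Q ⊆ D ∧ Q.Pairwise fun a b => a ⊓ b = ⊥}
    (by
      intro c hcS hchain
      refine ⟨⋃₀ c, ⟨?_, ?_⟩, fun s hs => Set.subset_sUnion_of_mem hs⟩
      · intro x hx
        obtain ⟨s, hs, hxs⟩ := hx
        exact (hcS hs).1 hxs
      · intro x hx y hy hxy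
        obtain ⟨s, hs, hxs⟩ := hx
        obtain ⟨t, ht, hyt⟩ := hy
        rcases hchain.total hs ht with h | h
        · exact (hcS ht).2 (h hxs) hyt hxy
        · exact (hcS hs).2 hxs (h hyt) hxy)
  obtain ⟨⟨hPD, hPdisj⟩, hPmax⟩ := hP
  have hpart : IsBPartition P := by
    refine ⟨fun h => (hPD h).1 rfl, hPdisj, ?_⟩
    intro c hc
    by_contra hcon
    push_neg at hcon
    have : ∃ c' : B, c' ≠ ⊥ ∧ (c' ≤ b ∨ c' ≤ bᶜ) ∧ c' ≤ c := by
      by_cases h1 : c ⊓ b = ⊥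
      · refine ⟨c ⊓ bᶜ, ?_, Or.inr inf_le_right, inf_le_left⟩
        intro h2
        apply hc
        have hcc : c = c ⊓ b ⊔ c ⊓ bᶜ := by rw [← inf_sup_left]; simp
        rw [hcc, h1, h2, sup_idem]
      · exact ⟨c ⊓ b, h1, Or.inl inf_le_right, inf_le_left⟩
    obtain ⟨c', hc'ne, hc'le, hc'c⟩ := this
    obtain ⟨d, hdD, hdc⟩ := split c' hc'ne hc'le
    have hdc' : d ≤ c := hdc.trans hc'c
    have hdP : d ∉ P := by
      intro h
      apply hdD.1
      have h0 := hcon d h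
      have : d ≤ c ⊓ d := le_inf hdc' le_rfl
      exact le_bot_iff.mp (h0 ▸ this)
    have hins : insert d P ∈ {Q : Set B | Q ⊆ D ∧ Q.Pairwise fun a b => a ⊓ b = ⊥} := by
      constructor
      · exact Set.insert_subset hdD hPD
      · intro x hx y hy hxy
        rcases hx with rfl | hx
        · rcases hy with rfl | hy
          · exact absurd rfl hxy
          · have h0 := hcon y hy
            have h1 : x ⊓ y ≤ c ⊓ y := inf_le_inf_right y hdc'
            exact le_bot_iff.mp (h0 ▸ h1)
        · rcases hy with rfl | hy
          · have h0 := hcon x hx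
            have h1 : x ⊓ y ≤ c ⊓ x := by
              rw [inf_comm]
              exact inf_le_inf_right x hdc'
            exact le_bot_iff.mp (h0 ▸ h1)
          · exact hPdisj hx hy hxy
    exact hdP (hPmax hins (Set.subset_insert d P) (Set.mem_insert d P))
  refine ⟨P, hpart, ?_, {p ∈ P | p ≤ b}, fun p hp => hp.1, ?_⟩
  · ext x
    simp only [Set.mem_inter_iff, Set.mem_empty_iff_false, iff_false, not_and]
    exact fun hx => (hPD hx).2.1
  · apply le_antisymm
    · by_contra hnle
      have hne : b ⊓ (sSup {p ∈ P | p ≤ b})ᶜ ≠ ⊥ := by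
        intro h
        exact hnle (sdiff_eq_bot_iff.mp (by simpa [sdiff_eq] using h))
      obtain ⟨p, hp, hmeet⟩ := hpart.2.2 _ hne
      rcases (hPD hp).2.2 with h | h
      · apply hmeet
        have hle : p ≤ sSup {p ∈ P | p ≤ b} := le_sSup ⟨hp, h⟩
        have : b ⊓ (sSup {p ∈ P | p ≤ b})ᶜ ⊓ p ≤ (sSup {p ∈ P | p ≤ b})ᶜ ⊓ sSup {p ∈ P | p ≤ b} :=
          inf_le_inf inf_le_right hle
        simpa using le_bot_iff.mp (this.trans (by simp))
      · apply hmeet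
        have : b ⊓ (sSup {p ∈ P | p ≤ b})ᶜ ⊓ p ≤ b ⊓ bᶜ := inf_le_inf inf_le_left h
        simpa using le_bot_iff.mp (this.trans (by simp))
    · exact sSup_le fun p hp => hp.2
end

section
/- Let B be a complete ccc Boolean algebra and U an ultrafilter on B. Then U is a coherent P-ultrafilter if and only if for every pair of partitions P, Q of B with P ⪯ Q, either U ∩ Q ≠ ∅, or there is a set X ⊆ P such that ⨆X ∈ U and for every q ∈ Q the set {p ∈ X : p ⊓ q ≠ ⊥} is finite. -/
open Cardinal Filter

variable {B : Type*}

private lemma trace_inf' [CompleteBooleanAlgebra B] {p : ℕ → B}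
    (hinj : Function.Injective p)
    (hdisj : (Set.range p).Pairwise fun a b => a ⊓ b = ⊥) (A C : Set ℕ) :
    (⨆ n ∈ A, p n) ⊓ (⨆ n ∈ C, p n) = ⨆ n ∈ A ∩ C, p n := by
  apply le_antisymm
  · simp only [iSup_inf_eq, inf_iSup_eq]
    apply iSup₂_le; intro m hm
    apply iSup₂_le; intro n hn
    rcases eq_or_ne n m with rfl | hmn
    · simpa using le_iSup₂ (f := fun k (_ : k ∈ A ∩ C) => p k) n ⟨hn, hm⟩
    · rw [hdisj ⟨n, rfl⟩ ⟨m, rfl⟩ (fun h => hmn (hinj h))]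
      exact bot_le
  · apply iSup₂_le; intro n hn
    exact le_inf (le_iSup₂ (f := fun k (_ : k ∈ A) => p k) n hn.1)
      (le_iSup₂ (f := fun k (_ : k ∈ C) => p k) n hn.2)

private lemma partition_sSup_eq_top' [CompleteBooleanAlgebra B] {P : Set B}
    (hP : IsBPartition P) : sSup P = ⊤ := by
  by_contra h
  obtain ⟨p, hp, hmeet⟩ := hP.2.2 (sSup P)ᶜ (by simp [compl_eq_bot, h])
  exact hmeet (le_bot_iff.1 (le_trans (inf_le_inf_left _ (le_sSup hp)) (by simp)))

private lemma trace_ultra' [CompleteBooleanAlgebra B] {U : Set B}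
    (hU : IsBUltrafilter U) {p : ℕ → B}
    (hinj : Function.Injective p) (hP : IsBPartition (Set.range p)) :
    IsNUltrafilter {A : Set ℕ | (⨆ n ∈ A, p n) ∈ U} := by
  have hcompl : ∀ A : Set ℕ, (⨆ n ∈ A, p n)ᶜ ≤ ⨆ n ∈ Aᶜ, p n := by
    intro A
    have htop : (⨆ n ∈ A, p n) ⊔ (⨆ n ∈ Aᶜ, p n) = ⊤ := by
      rw [← iSup_union, Set.union_compl_self, iSup_univ, ← sSup_range]
      exact partition_sSup_eq_top' hP
    calc (⨆ n ∈ A, p n)ᶜ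
        = (⨆ n ∈ A, p n)ᶜ ⊓ ((⨆ n ∈ A, p n) ⊔ (⨆ n ∈ Aᶜ, p n)) := by
          rw [htop, inf_top_eq]
      _ ≤ ⨆ n ∈ Aᶜ, p n := by rw [inf_sup_left]; simp
  refine ⟨⟨?_, ?_, ?_, ?_⟩, ?_⟩
  · simpa using hU.1.1
  · show (⨆ n ∈ Set.univ, p n) ∈ U
    rw [iSup_univ, ← sSup_range, partition_sSup_eq_top' hP]
    exact hU.1.2.1
  · intro A hA C hAC
    exact hU.1.2.2.1 _ hA _ (biSup_mono hAC)
  · intro A hA C hC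
    show (⨆ n ∈ A ∩ C, p n) ∈ U
    rw [← trace_inf' hinj hP.2.1]
    exact hU.1.2.2.2 _ hA _ hC
  · intro A
    rcases hU.2 (⨆ n ∈ A, p n) with h | h
    · exact Or.inl h
    · exact Or.inr (hU.1.2.2.1 _ h _ (hcompl A))

/-- Characterization of coherent P-ultrafilters via pairs of partitions. -/
theorem coherentP_iff_partition_pairs [CompleteBooleanAlgebra B]
    (hcc : BCCC B) (U : Set B) (hU : IsBUltrafilter U) :
    IsCoherentPUltrafilter U ↔
      ∀ P Q : Set B, IsBPartition P → IsBPartition Q → BRefines P Q →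
        (Q ∩ U).Nonempty ∨
        ∃ X ⊆ P, sSup X ∈ U ∧ ∀ q ∈ Q, {p ∈ X | p ⊓ q ≠ ⊥}.Finite  := by
  classical
  constructor
  · -- forward direction
    intro hCoh P Q hP hQ hPQ
    by_cases hQU : (Q ∩ U).Nonempty
    · exact Or.inl hQU
    right
    have hQUe : ∀ q ∈ Q, q ∉ U := fun q hq hu => hQU ⟨q, hq, hu⟩
    by_cases hPfin : P.Finite
    · exact ⟨P, subset_rfl, by rw [partition_sSup_eq_top' hP]; exact hU.1.2.1,
        fun q _ => hPfin.subset (fun x hx => hx.1)⟩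
    · have hPc : P.Countable := hcc P hP.1 hP.2.1
      have hPinf : P.Infinite := hPfin
      haveI := hPc.to_subtype
      haveI := hPinf.to_subtype
      obtain ⟨e⟩ : Nonempty (ℕ ≃ P) := nonempty_equiv_of_countable
      set p : ℕ → B := fun n => (e n : B) with hp_def
      have hinj : Function.Injective p := fun a b h => e.injective (Subtype.ext h)
      have hrange : Set.range p = P := by
        ext x
        constructor
        · rintro ⟨n, rfl⟩; exact (e n).2
        · intro hx; exact ⟨e.symm ⟨x, hx⟩, by simp [hp_def]⟩
      have hPp : IsBPartition (Set.range p) := by rw [hrange]; exact hP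
      have hPP := hCoh.2 p hinj hPp
      choose f hfQ hfle using fun k => hPQ (p k) (hrange ▸ Set.mem_range_self k)
      set A : ℕ → Set ℕ := fun n => {k | f k = f n ∧ ∀ m < n, f m ≠ f n} with hA_def
      have hdisjA : Pairwise fun m n => A m ∩ A n = ∅ := by
        intro m n hmn
        rw [Set.eq_empty_iff_forall_notMem]
        rintro k ⟨⟨h1, h2⟩, ⟨h3, h4⟩⟩
        rcases hmn.lt_or_gt with hlt | hlt
        · exact h4 m hlt (h1 ▸ h3.symm ▸ rfl)
        · exact h2 n hlt (h3 ▸ h1.symm ▸ rfl)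
      have hcov : (⋃ n, A n) = Set.univ := by
        rw [Set.eq_univ_iff_forall]
        intro k
        have hex : ∃ n, f n = f k := ⟨k, rfl⟩
        refine Set.mem_iUnion.2 ⟨Nat.find hex, (Nat.find_spec hex).symm, ?_⟩
        intro m hm hc
        exact Nat.find_min hex hm (hc.trans (Nat.find_spec hex))
      have hAnotV : ∀ n, A n ∉ {A : Set ℕ | (⨆ n ∈ A, p n) ∈ U} := by
        intro n hmem
        have hle : (⨆ k ∈ A n, p k) ≤ f n := by
          apply iSup₂_le
          intro k hk
          exact hk.1 ▸ hfle k
        exact hQUe (f n) (hfQ n) (hU.1.2.2.1 _ hmem _ hle)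
      obtain ⟨S, hSV, hSfin⟩ := hPP.2 A hdisjA hcov hAnotV
      refine ⟨p '' S, by rw [← hrange]; exact Set.image_subset_range p S, ?_, ?_⟩
      · rw [sSup_image]; exact hSV
      · intro q hq
        have key : ∀ k ∈ S, p k ⊓ q ≠ ⊥ → f k = q := by
          intro k _ hne
          by_contra hfkq
          have : f k ⊓ q = ⊥ := hQ.2.1 (hfQ k) hq hfkq
          exact hne (le_bot_iff.1 (this ▸ inf_le_inf_right q (hfle k)))
        by_cases hex : ∃ n, f n = q
        · have hsub : {x ∈ p '' S | x ⊓ q ≠ ⊥} ⊆ p '' (S ∩ A (Nat.find hex)) := by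
            rintro x ⟨⟨k, hkS, rfl⟩, hne⟩
            refine ⟨k, ⟨hkS, ?_, ?_⟩, rfl⟩
            · rw [key k hkS hne, Nat.find_spec hex]
            · intro m hm hc
              exact Nat.find_min hex hm (hc.trans (Nat.find_spec hex))
          exact (((hSfin (Nat.find hex)).image p).subset hsub)
        · have : {x ∈ p '' S | x ⊓ q ≠ ⊥} = ∅ := by
            rw [Set.eq_empty_iff_forall_notMem]
            rintro x ⟨⟨k, hkS, rfl⟩, hne⟩
            exact hex ⟨k, key k hkS hne⟩
          rw [this]; exact Set.finite_empty
  · -- backward direction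
    intro h
    refine ⟨hU, ?_⟩
    intro p hinj hPp
    refine ⟨trace_ultra' hU hinj hPp, ?_⟩
    intro A hdisjA hcov hAV
    set q : ℕ → B := fun n => ⨆ k ∈ A n, p k with hq_def
    have hqle : ∀ n, ∀ k ∈ A n, p k ≤ q n := by
      intro n k hk
      exact le_iSup₂ (f := fun k (_ : k ∈ A n) => p k) k hk
    have hqdisj : ∀ m n, m ≠ n → q m ⊓ q n = ⊥ := by
      intro m n hmn
      rw [hq_def]
      simp only
      rw [trace_inf' hinj hPp.2.1, hdisjA hmn]
      simp
    set Q : Set B := Set.range q \ {⊥} with hQ_def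
    have hpbot : ∀ k, p k ≠ ⊥ := fun k hk => hPp.1 (hk ▸ ⟨k, rfl⟩)
    have hQpart : IsBPartition Q := by
      refine ⟨fun hc => hc.2 rfl, ?_, ?_⟩
      · rintro x ⟨⟨m, rfl⟩, hxb⟩ y ⟨⟨n, rfl⟩, hyb⟩ hxy
        exact hqdisj m n (fun hc => hxy (by rw [hc]))
      · intro b hb
        obtain ⟨x, ⟨k, rfl⟩, hbk⟩ := hPp.2.2 b hb
        obtain ⟨n, hkn⟩ := Set.mem_iUnion.1 (hcov ▸ Set.mem_univ k)
        have hle : p k ≤ q n := hqle n k hkn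
        have hqn : q n ≠ ⊥ := fun hc => hpbot k (le_bot_iff.1 (hc ▸ hle))
        refine ⟨q n, ⟨⟨n, rfl⟩, hqn⟩, fun hc => hbk ?_⟩
        exact le_bot_iff.1 (hc ▸ inf_le_inf_left b hle)
    have hrefQ : BRefines (Set.range p) Q := by
      rintro x ⟨k, rfl⟩
      obtain ⟨n, hkn⟩ := Set.mem_iUnion.1 (hcov ▸ Set.mem_univ k)
      have hle : p k ≤ q n := hqle n k hkn
      exact ⟨q n, ⟨⟨n, rfl⟩, fun hc => hpbot k (le_bot_iff.1 (hc ▸ hle))⟩, hle⟩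
    rcases h (Set.range p) Q hPp hQpart hrefQ with ⟨x, hxQ, hxU⟩ | ⟨X, hXP, hXU, hfin⟩
    · obtain ⟨n, rfl⟩ := hxQ.1
      exact absurd hxU (hAV n)
    · refine ⟨{k | p k ∈ X}, ?_, ?_⟩
      · have himg : p '' {k | p k ∈ X} = X := by
          ext x
          constructor
          · rintro ⟨k, hk, rfl⟩; exact hk
          · intro hx
            obtain ⟨k, rfl⟩ := hXP hx
            exact ⟨k, hx, rfl⟩
        show (⨆ n ∈ {k | p k ∈ X}, p n) ∈ U
        rw [← sSup_image, himg]
        exact hXU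
      · intro n
        rcases Set.eq_empty_or_nonempty (A n) with hAe | ⟨k₀, hk₀⟩
        · rw [hAe]; simp
        · have hqn : q n ∈ Q :=
            ⟨⟨n, rfl⟩, fun hc => hpbot k₀ (le_bot_iff.1 (hc ▸ hqle n k₀ hk₀))⟩
          have hsub : {k | p k ∈ X} ∩ A n ⊆ p ⁻¹' {x ∈ X | x ⊓ q n ≠ ⊥} := by
            rintro k ⟨hkX, hkA⟩
            refine ⟨hkX, ?_⟩
            rw [inf_eq_left.2 (hqle n k hkA)]
            exact hpbot k
          exact (Set.Finite.preimage (hinj.injOn) (hfin (q n) hqn)).subset hsub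
end

section
/- Let B be a complete Boolean algebra and let P ⪯ Q be countably infinite partitions of B such that each q_n ∈ Q (for an injective enumeration (q_n)_{n∈ℕ} of Q) is partitioned into infinitely many elements {p_n^m : m ∈ ℕ} of P. Let {f_α : α < κ} be a dominating family of functions ℕ → ℕ, and for each α put a_α = ⨆{p_n^m : n ∈ ℕ, m > f_α(n)}. Then the family {a_α : α < κ} ∪ {q_nᶜ : n ∈ ℕ} has the finite intersection property (every finite subfamily has nonzero meet), and no ultrafilter on B containing this family is a coherent P-ultrafilter. -/
open Cardinal Filter

variable {B : Type*}

/-! For the finite intersection property, one `p n m` with `n` outside the finitely many columns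
removed by the `(q n)ᶜ` and `m` above the finitely many values `f α n` lies below the whole meet.

For the second part, the trace of `U` on `P` has the columns `{p n m : m ∈ ℕ}` as pieces, none of
which is in `U` since `(q n)ᶜ ∈ U`. If the trace were a P-point, some `S` in it would meet every
column finitely, i.e. lie below the graph of some `g`. A dominating `f α` bounds `g` beyond some
`N`, so `a α` is disjoint from `⨆ S` beyond `N`, while the columns below `N` are killed by
`⨅_{n < N} (q n)ᶜ ∈ U`; thus `⊥ ∈ U`. -/

open Function

section BPartition

variable [BooleanAlgebra B] {α : Type*} {v : α → B}

theorem IsBPartition.ne_bot_s13 (hP : IsBPartition (Set.range v)) (i : α) : v i ≠ ⊥ :=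
  fun h => hP.1 ⟨i, h⟩

theorem IsBPartition.pairwise_disjoint_s13 (hP : IsBPartition (Set.range v)) (hv : Injective v) :
    Pairwise (Disjoint on v) :=
  fun i j hij => disjoint_iff.2 (hP.2.1 ⟨i, rfl⟩ ⟨j, rfl⟩ (hv.ne hij))

end BPartition

section BFilter

variable [BooleanAlgebra B] {F : Set B}

theorem IsBFilter.inf_mem (hF : IsBFilter F) {a b : B} (ha : a ∈ F) (hb : b ∈ F) : a ⊓ b ∈ F :=
  hF.2.2.2 a ha b hb

theorem IsBFilter.finset_inf_mem {α : Type*} (hF : IsBFilter F) {v : α → B} (t : Finset α)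
    (hv : ∀ i ∈ t, v i ∈ F) : t.inf v ∈ F := by
  induction t using Finset.cons_induction with
  | empty => exact hF.2.1
  | cons i t _ ih =>
    rw [Finset.inf_cons]
    exact hF.inf_mem (hv i (t.mem_cons_self i)) (ih fun j hj => hv j (Finset.mem_cons_of_mem hj))

theorem IsBFilter.notMem_of_le_of_compl_mem (hF : IsBFilter F) {a b : B} (hab : a ≤ b)
    (hb : bᶜ ∈ F) : a ∉ F := fun ha => by
  have hbot : a ⊓ bᶜ = ⊥ := disjoint_iff.1 (disjoint_compl_right.mono_left hab)
  exact hF.1 (hbot ▸ hF.inf_mem ha hb)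

end BFilter

theorem biSup_preimage_equiv {α β γ : Type*} [CompleteLattice γ] (e : α ≃ β) (v : β → γ)
    (T : Set β) : ⨆ k ∈ e ⁻¹' T, v (e k) = ⨆ x ∈ T, v x := by
  rw [← iSup_image, Set.image_preimage_eq T e.surjective]

theorem IsCoherentPUltrafilter.exists_finite_inter_fiber [CompleteBooleanAlgebra B] {U : Set B}
    (hU : IsCoherentPUltrafilter U) {ι : Type*} [Denumerable ι] {v : ι → B}
    (hv : Injective v) (hP : IsBPartition (Set.range v)) (π : ι → ℕ)
    (hπ : ∀ n, (⨆ x ∈ π ⁻¹' {n}, v x) ∉ U) :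
    ∃ S : Set ι, (⨆ x ∈ S, v x) ∈ U ∧ ∀ n, (S ∩ π ⁻¹' {n}).Finite := by
  set e : ℕ ≃ ι := (Denumerable.eqv ι).symm
  have hpoint := (hU.2 (v ∘ e) (hv.comp e.injective) (e.surjective.range_comp v ▸ hP)).2
  obtain ⟨S, hSU, hSfin⟩ := hpoint (fun n => e ⁻¹' (π ⁻¹' {n}))
    (fun m n hmn => Set.disjoint_iff_inter_eq_empty.1
      (((Set.disjoint_singleton.2 hmn).preimage π).preimage e))
    (Set.eq_univ_of_forall fun k => Set.mem_iUnion.2 ⟨π (e k), rfl⟩)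
    fun n hn => hπ n <| by
      simpa only [Set.mem_ofPred_eq, comp_apply, biSup_preimage_equiv] using hn
  refine ⟨e '' S, by simpa only [iSup_image, Set.mem_ofPred_eq, comp_apply] using hSU, fun n => ?_⟩
  rw [← Set.image_inter_preimage]
  exact (hSfin n).image e

theorem exists_bound_of_finite_fiber {S : Set (ℕ × ℕ)}
    (hS : ∀ n, (S ∩ Prod.fst ⁻¹' {n}).Finite) : ∃ g : ℕ → ℕ, ∀ x ∈ S, x.2 ≤ g x.1 := by
  choose g hg using fun n => ((hS n).image Prod.snd).bddAbove
  exact ⟨g, fun x hx => hg x.1 ⟨x, ⟨hx, rfl⟩, rfl⟩⟩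

section SupAboveGraph

variable [CompleteBooleanAlgebra B] (p : ℕ → ℕ → B)

/-- The element `a_α` of the paper, for `g = f_α`. -/
def supAboveGraph (g : ℕ → ℕ) : B :=
  ⨆ n, ⨆ m, ⨆ _ : g n < m, p n m

variable {p}

theorem le_supAboveGraph {g : ℕ → ℕ} {n m : ℕ} (h : g n < m) : p n m ≤ supAboveGraph p g :=
  le_iSup_of_le n <| le_iSup_of_le m <| le_iSup_of_le h le_rfl

theorem disjoint_supAboveGraph (hp : Pairwise (Disjoint on uncurry p)) {g : ℕ → ℕ} {n m : ℕ}
    (h : m ≤ g n) : Disjoint (supAboveGraph p g) (p n m) := by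
  simp only [supAboveGraph, iSup_disjoint_iff]
  intro n' m' hm'
  refine @hp (n', m') (n, m) fun heq => ?_
  obtain ⟨rfl, rfl⟩ := Prod.mk.inj heq
  omega

variable {q : ℕ → B}

theorem supAboveGraph_finset_inf_inf_ne_bot (hq : Pairwise (Disjoint on q))
    (hpq : ∀ n m, p n m ≤ q n) (hp : ∀ n m, p n m ≠ ⊥) {ι : Type*} (f : ι → ℕ → ℕ)
    (s : Finset ι) (t : Finset ℕ) :
    s.inf (fun i => supAboveGraph p (f i)) ⊓ t.inf (fun n => (q n)ᶜ) ≠ ⊥ := by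
  obtain ⟨n, hn⟩ := Infinite.exists_notMem_finset t
  set M := s.sup (fun i => f i n) + 1
  have hle : p n M ≤ s.inf (fun i => supAboveGraph p (f i)) ⊓ t.inf (fun n => (q n)ᶜ) :=
    le_inf (Finset.le_inf fun i hi => le_supAboveGraph
      (Nat.lt_succ_of_le (Finset.le_sup (f := fun i => f i n) hi)))
      (Finset.le_inf fun n' hn' =>
        (hpq n M).trans (hq fun h : n = n' => hn (h ▸ hn')).le_compl_right)
  exact ne_bot_of_le_ne_bot (hp n M) hle

theorem disjoint_supAboveGraph_inf_biSup (hp : Pairwise (Disjoint on uncurry p))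
    (hpq : ∀ n m, p n m ≤ q n) {S : Set (ℕ × ℕ)} {g h : ℕ → ℕ} (hS : ∀ x ∈ S, x.2 ≤ g x.1)
    {N : ℕ} (hgh : ∀ n ≥ N, g n ≤ h n) :
    Disjoint (supAboveGraph p h ⊓ (Finset.range N).inf (fun n => (q n)ᶜ))
      (⨆ x ∈ S, p x.1 x.2) := by
  refine disjoint_iSup₂_iff.2 fun x hx => ?_
  by_cases hxN : x.1 < N
  · have hc : (Finset.range N).inf (fun n => (q n)ᶜ) ≤ (q x.1)ᶜ :=
      Finset.inf_le (Finset.mem_range.2 hxN)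
    exact (disjoint_compl_left.mono hc (hpq x.1 x.2)).mono_left inf_le_right
  · exact (disjoint_supAboveGraph hp ((hS x hx).trans (hgh _ (not_lt.1 hxN)))).mono_left
      inf_le_left

theorem not_isCoherentPUltrafilter_of_dominating (hpinj : Injective (uncurry p))
    (hP : IsBPartition (Set.range (uncurry p))) (hpq : ∀ n m, p n m ≤ q n) {ι : Type*}
    {f : ι → ℕ → ℕ} (hdom : ∀ g : ℕ → ℕ, ∃ i, ∀ᶠ n in atTop, g n ≤ f i n) {U : Set B}
    (haU : ∀ i, supAboveGraph p (f i) ∈ U) (hqU : ∀ n, (q n)ᶜ ∈ U) :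
    ¬IsCoherentPUltrafilter U := fun hU => by
  have hF : IsBFilter U := hU.1.1
  have hcol (n : ℕ) : (⨆ x ∈ Prod.fst ⁻¹' {n}, uncurry p x) ∉ U :=
    hF.notMem_of_le_of_compl_mem (iSup₂_le fun x hx => hx ▸ hpq x.1 x.2) (hqU n)
  obtain ⟨S, hSU, hSfin⟩ := hU.exists_finite_inter_fiber hpinj hP Prod.fst hcol
  obtain ⟨g, hg⟩ := exists_bound_of_finite_fiber hSfin
  obtain ⟨i, hi⟩ := hdom g
  obtain ⟨N, hN⟩ := eventually_atTop.1 hi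
  have hmem := hF.inf_mem (hF.inf_mem (haU i) (hF.finset_inf_mem (Finset.range N) fun n _ => hqU n))
    hSU
  exact hF.1 (disjoint_iff.1 (disjoint_supAboveGraph_inf_biSup
    (hP.pairwise_disjoint_s13 hpinj) hpq hg hN) ▸ hmem)

end SupAboveGraph

/-- The Ketonen argument in `B`: from a dominating family one builds a
centered family which no coherent P-ultrafilter can extend. -/
theorem dominating_family_kills_coherence [CompleteBooleanAlgebra B] {ι : Type*}
    (p : ℕ → ℕ → B) (q : ℕ → B)
    (hpinj : Function.Injective fun x : ℕ × ℕ => p x.1 x.2)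
    (hqinj : Function.Injective q)
    (hP : IsBPartition (Set.range fun x : ℕ × ℕ => p x.1 x.2))
    (hQ : IsBPartition (Set.range q))
    (hpq : ∀ n m : ℕ, p n m ≤ q n)
    (f : ι → ℕ → ℕ)
    (hdom : ∀ g : ℕ → ℕ, ∃ i, ∀ᶠ n in Filter.atTop, g n ≤ f i n)
    (a : ι → B) (ha : ∀ i, a i = ⨆ n, ⨆ m, ⨆ _ : f i n < m, p n m) :
    (∀ (s : Finset ι) (t : Finset ℕ),
        s.inf a ⊓ t.inf (fun n => (q n)ᶜ) ≠ ⊥) ∧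
    ∀ U : Set B, (∀ i, a i ∈ U) → (∀ n, (q n)ᶜ ∈ U) →
      ¬IsCoherentPUltrafilter U := by
  obtain rfl : a = fun i => supAboveGraph p (f i) := funext ha
  exact ⟨supAboveGraph_finset_inf_inf_ne_bot (hQ.pairwise_disjoint_s13 hqinj) hpq
      (fun n m => hP.ne_bot_s13 (n, m)) f,
    fun U haU hqU => not_isCoherentPUltrafilter_of_dominating hpinj hP hpq hdom haU hqU⟩
end

section
/- Let B be a complete ccc Boolean algebra and let U be a coherent P-ultrafilter on B. Let {F_n : n ∈ ℕ} be a countable family of ultrafilters on B with F_n ≠ U for all n, which is nowhere dense in the sense that for every nonzero b ∈ B there is a nonzero c ≤ b with c ∉ F_n for all n ∈ ℕ. Then there exists u ∈ U such that u ∉ F_n for every n ∈ ℕ. (Topologically: U is an untouchable point of the Stone space of B, i.e., U lies outside the closure of every countable nowhere dense set of ultrafilters not containing U.) -/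
open Cardinal Filter

variable {B : Type*}

/-!
The pieces avoiding every `F n` are dense, so a maximal antichain of them is a partition, countable
by ccc. Choose `d n ∈ U \ F n` and cut the `i`-th piece by `d 0, …, d (i - 1)`: the refined
partition `p` still avoids every `F n`, and each `d k` is decided by all but finitely many of its
pieces. If no piece lies in `U`, the trace of `U` on `p` is a P-point containing every
`{m | p m ≤ d k}`; for a pseudo-intersection `S` of these sets, `u = ⨆ m ∈ S, p m` lies in `U`
and, for each `k`, below `d k` up to finitely many pieces, so `u ∉ F k`.
-/

lemma Set.Countable.exists_injective_range_eq {α : Type*} {s : Set α} (hc : s.Countable)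
    (hi : s.Infinite) : ∃ f : ℕ → α, Function.Injective f ∧ Set.range f = s := by
  have := hc.to_subtype
  have := hi.to_subtype
  obtain ⟨_⟩ := nonempty_denumerable s
  let e := (Denumerable.eqv s).symm
  exact ⟨(↑) ∘ e, Subtype.val_injective.comp e.injective, by
    rw [Set.range_comp, e.range_eq_univ, Set.image_univ, Subtype.range_coe]⟩

lemma IsPPointFamily.exists_diff_finite {V : Set (Set ℕ)} (hV : IsPPointFamily V)
    {G : ℕ → Set ℕ} (hG : ∀ k, G k ∈ V) : ∃ S ∈ V, ∀ k, (S \ G k).Finite := by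
  classical
  obtain ⟨⟨hempty, -, hmono, hinter⟩, -⟩ := hV.1
  by_cases hcap : (⋂ k, G k) ∈ V
  · exact ⟨_, hcap, fun k => by simp [Set.sdiff_eq_empty.2 (Set.iInter_subset G k)]⟩
  -- The fibres of `rank` partition ℕ into sets outside `V`; a set meeting each fibre finitely
  -- is almost contained in every `G k`, since `x ∉ G k` forces `rank x ≤ k + 1`.
  let rank (x : ℕ) : ℕ := if h : ∃ k, x ∉ G k then Nat.find h + 1 else 0
  have rank_le {x k : ℕ} (hx : x ∉ G k) : rank x ≤ k + 1 := by
    simp only [rank, dif_pos (⟨k, hx⟩ : ∃ k, x ∉ G k)]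
    exact Nat.succ_le_succ (Nat.find_min' _ hx)
  have rank_zero : rank ⁻¹' {0} ⊆ ⋂ k, G k := fun x hx => by
    by_contra h
    simp_all [rank, Set.mem_iInter]
  have rank_succ (k : ℕ) : rank ⁻¹' {k + 1} ⊆ (G k)ᶜ := fun x hx => by
    have h : ∃ k, x ∉ G k := by by_contra! h; simp [rank, h] at hx
    simp only [Set.mem_preimage, Set.mem_singleton_iff, rank, dif_pos h] at hx
    exact Nat.add_right_cancel hx ▸ Nat.find_spec h
  have hfiber : ∀ n, rank ⁻¹' {n} ∉ V
    | 0, h => hcap (hmono _ h _ rank_zero)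
    | k + 1, h => hempty (by
        simpa [(Set.subset_compl_iff_disjoint_right.1 (rank_succ k)).inter_eq]
          using hinter _ h _ (hG k))
  obtain ⟨S, hSV, hS⟩ := hV.2 (fun n => rank ⁻¹' {n})
    (fun m n hmn => by ext x; simp +contextual [hmn])
    (by ext x; simp) hfiber
  refine ⟨S, hSV, fun k => ((Set.finite_le_nat (k + 1)).biUnion fun n _ => hS n).subset ?_⟩
  intro x ⟨hxS, hxG⟩
  exact Set.mem_biUnion (rank_le hxG) ⟨hxS, rfl⟩

section BooleanAlgebra

variable [BooleanAlgebra B] {G : Set B} {a b : B}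

lemma IsBFilter.mem_of_le (hG : IsBFilter G) (ha : a ∈ G) (hab : a ≤ b) : b ∈ G :=
  hG.2.2.1 a ha b hab

lemma IsBFilter.compl_notMem (hG : IsBFilter G) (hb : b ∈ G) : bᶜ ∉ G := fun hc =>
  hG.1 (by simpa using hG.2.2.2 b hb _ hc)

lemma IsBUltrafilter.compl_mem_iff (hG : IsBUltrafilter G) : bᶜ ∈ G ↔ b ∉ G :=
  ⟨fun hc hb => hG.1.compl_notMem hb hc, (hG.2 b).resolve_left⟩

lemma IsBUltrafilter.sup_mem_iff (hG : IsBUltrafilter G) : a ⊔ b ∈ G ↔ a ∈ G ∨ b ∈ G := by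
  refine ⟨fun h => ?_, ?_⟩
  · by_contra! hab
    have hinf := hG.1.2.2.2 _ (hG.compl_mem_iff.2 hab.1) _ (hG.compl_mem_iff.2 hab.2)
    rw [← compl_sup] at hinf
    exact hG.compl_mem_iff.1 hinf h
  · rintro (h | h)
    · exact hG.1.mem_of_le h le_sup_left
    · exact hG.1.mem_of_le h le_sup_right

lemma IsBUltrafilter.exists_mem_notMem_of_ne {U F : Set B} (hU : IsBUltrafilter U)
    (hF : IsBFilter F) (hne : F ≠ U) : ∃ e ∈ U, e ∉ F := by
  by_contra! hUF
  refine hne (Set.Subset.antisymm (fun b hb => ?_) hUF)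
  by_contra hbU
  exact hF.compl_notMem hb (hUF _ (hU.compl_mem_iff.2 hbU))

lemma exists_isBPartition_subset {T : Set B} (hT : ⊥ ∉ T)
    (hdense : ∀ b, b ≠ ⊥ → ∃ c ∈ T, c ≤ b) : ∃ Q ⊆ T, IsBPartition Q := by
  obtain ⟨Q, hQ⟩ := zorn_subset {Q | Q ⊆ T ∧ Q.Pairwise fun a b => a ⊓ b = ⊥}
    fun c hc hchain => ⟨⋃₀ c, ⟨Set.sUnion_subset fun s hs => (hc hs).1,
      hchain.pairwise_sUnion.2 fun s hs => (hc hs).2⟩, fun s hs => Set.subset_sUnion_of_mem hs⟩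
  refine ⟨Q, hQ.prop.1, fun h => hT (hQ.prop.1 h), hQ.prop.2, fun b hb => ?_⟩
  by_contra! hbQ
  obtain ⟨c, hcT, hcb⟩ := hdense b hb
  have hcQ (q : B) (hq : q ∈ Q) : c ⊓ q = ⊥ :=
    le_bot_iff.1 ((inf_le_inf_right q hcb).trans (hbQ q hq).le)
  have hc : c ∈ Q := hQ.mem_of_prop_insert ⟨Set.insert_subset hcT hQ.prop.1,
    hQ.prop.2.insert fun q hq _ => ⟨hcQ q hq, inf_comm q c ▸ hcQ q hq⟩⟩
  exact hT ((inf_idem c).symm.trans (hcQ c hc) ▸ hcT)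

end BooleanAlgebra

section Complete

variable [CompleteBooleanAlgebra B]

lemma IsBUltrafilter.exists_mem_of_biSup_mem {G : Set B} (hG : IsBUltrafilter G) {ι : Type*}
    {s : Set ι} (hs : s.Finite) {f : ι → B} (h : ⨆ i ∈ s, f i ∈ G) : ∃ i ∈ s, f i ∈ G := by
  induction s, hs using Set.Finite.induction_on with
  | empty => exact absurd (by simpa using h) hG.1.1
  | insert _ _ ih =>
    rw [iSup_insert] at h
    rcases hG.sup_mem_iff.1 h with h | h
    · exact ⟨_, Set.mem_insert _ _, h⟩
    · obtain ⟨i, hi, hfi⟩ := ih h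
      exact ⟨i, Set.mem_insert_of_mem _ hi, hfi⟩

lemma IsBPartition.sSup_eq_top {P : Set B} (hP : IsBPartition P) : sSup P = ⊤ := by
  by_contra h
  obtain ⟨p, hpP, hp⟩ := hP.2.2 (sSup P)ᶜ (mt compl_eq_bot.1 h)
  exact hp (disjoint_iff.1 (disjoint_compl_left.mono_right (le_sSup hpP)))

lemma le_sup_biSup_of_iSup_eq_top {ι : Type*} {p : ι → B} (hp : ⨆ m, p m = ⊤) (x : B) :
    x ≤ (⨆ m ∈ {m | p m ≤ x}, p m) ⊔ ⨆ m ∈ {m | ¬ p m ≤ x ∧ ¬ p m ≤ xᶜ}, p m := by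
  conv_lhs => rw [← inf_top_eq x, ← hp, inf_iSup_eq]
  refine iSup_le fun m => ?_
  by_cases h₁ : p m ≤ x
  · exact le_sup_of_le_left (inf_le_right.trans (le_biSup p h₁))
  by_cases h₂ : p m ≤ xᶜ
  · exact ((inf_le_inf_left x h₂).trans inf_compl_eq_bot.le).trans bot_le
  · exact le_sup_of_le_right (inf_le_right.trans (le_biSup p ⟨h₁, h₂⟩))

def cell (d : ℕ → B) (n : ℕ) (s : Fin n → Bool) : B :=
  ⨅ j : Fin n, bif s j then d j else (d j)ᶜ

section Cell

variable {d : ℕ → B} {n : ℕ}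

lemma cell_le_or_le_compl (s : Fin n → Bool) (j : Fin n) :
    cell d n s ≤ d j ∨ cell d n s ≤ (d j)ᶜ := by
  have h : cell d n s ≤ bif s j then d j else (d j)ᶜ := iInf_le _ j
  cases hs : s j
  · exact .inr (by simpa [hs] using h)
  · exact .inl (by simpa [hs] using h)

lemma disjoint_cell {s t : Fin n → Bool} (hst : s ≠ t) : Disjoint (cell d n s) (cell d n t) := by
  obtain ⟨j, hj⟩ := Function.ne_iff.1 hst
  have hs : cell d n s ≤ bif s j then d j else (d j)ᶜ := iInf_le _ j
  have ht : cell d n t ≤ bif t j then d j else (d j)ᶜ := iInf_le _ j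
  cases hsj : s j <;> cases htj : t j <;> simp only [hsj, htj, cond_true, cond_false] at hs ht hj
  · exact absurd rfl hj
  · exact disjoint_compl_left.mono hs ht
  · exact disjoint_compl_right.mono hs ht
  · exact absurd rfl hj

lemma iSup_cell : ⨆ s, cell d n s = ⊤ := by
  simp only [cell]
  rw [← iInf_iSup_eq_of_finite (f := fun (j : Fin n) (b : Bool) => bif b then d j else (d j)ᶜ)]
  simp [iSup_bool_eq]

lemma exists_inf_cell_ne_bot {x : B} (hx : x ≠ ⊥) : ∃ s, x ⊓ cell d n s ≠ ⊥ := by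
  by_contra! h
  exact hx (by rw [← inf_top_eq x, ← iSup_cell (d := d) (n := n), inf_iSup_eq]; simp [h])

end Cell

def cellRefinement (Q : Set B) (ι : B → ℕ) (d : ℕ → B) : Set B :=
  {b | b ≠ ⊥ ∧ ∃ q ∈ Q, ∃ s, q ⊓ cell d (ι q) s = b}

section CellRefinement

variable {Q : Set B} {ι : B → ℕ} {d : ℕ → B}

lemma bRefines_cellRefinement : BRefines (cellRefinement Q ι d) Q :=
  fun _ ⟨_, q, hq, _, h⟩ => ⟨q, hq, h ▸ inf_le_left⟩

lemma isBPartition_cellRefinement (hQ : IsBPartition Q) : IsBPartition (cellRefinement Q ι d) := by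
  refine ⟨fun h => h.1 rfl, ?_, fun b hb => ?_⟩
  · rintro _ ⟨-, q, hq, s, rfl⟩ _ ⟨-, q', hq', t, rfl⟩ hne
    rcases eq_or_ne q q' with rfl | hqq
    · have hst : s ≠ t := by rintro rfl; exact hne rfl
      exact disjoint_iff.1 ((disjoint_cell hst).mono inf_le_right inf_le_right)
    · exact le_bot_iff.1 ((inf_le_inf inf_le_left inf_le_left).trans (hQ.2.1 hq hq' hqq).le)
  · obtain ⟨q, hq, hbq⟩ := hQ.2.2 b hb
    obtain ⟨s, hs⟩ := exists_inf_cell_ne_bot (d := d) (n := ι q) hbq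
    refine ⟨q ⊓ cell d (ι q) s, ⟨fun h => hs ?_, q, hq, s, rfl⟩, by rwa [← inf_assoc]⟩
    rw [inf_assoc, h, inf_bot_eq]

lemma countable_cellRefinement (hQ : Q.Countable) : (cellRefinement Q ι d).Countable := by
  refine (hQ.biUnion fun q _ => Set.countable_range fun s => q ⊓ cell d (ι q) s).mono ?_
  rintro _ ⟨-, q, hq, s, rfl⟩
  exact Set.mem_biUnion hq ⟨s, rfl⟩

lemma finite_undecided_cellRefinement (hι : Set.InjOn ι Q) (k : ℕ) :
    {p ∈ cellRefinement Q ι d | ¬ p ≤ d k ∧ ¬ p ≤ (d k)ᶜ}.Finite := by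
  have hQk : {q ∈ Q | ι q ≤ k}.Finite :=
    ((Set.finite_Iic k).subset (Set.image_subset_iff.2 fun _ hq => hq.2)).of_finite_image
      (hι.mono fun _ hq => hq.1)
  refine (hQk.biUnion fun q _ => Set.finite_range fun s => q ⊓ cell d (ι q) s).subset ?_
  rintro _ ⟨⟨-, q, hq, s, rfl⟩, hle, hle'⟩
  refine Set.mem_biUnion ⟨hq, ?_⟩ ⟨s, rfl⟩
  by_contra! hk
  rcases cell_le_or_le_compl (d := d) s ⟨k, hk⟩ with h | h
  · exact hle (inf_le_right.trans h)
  · exact hle' (inf_le_right.trans h)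

lemma IsBPartition.exists_refinement_decides (hQ : IsBPartition Q) (hQc : Q.Countable)
    (d : ℕ → B) : ∃ P, IsBPartition P ∧ P.Countable ∧ BRefines P Q ∧
      ∀ k, {p ∈ P | ¬ p ≤ d k ∧ ¬ p ≤ (d k)ᶜ}.Finite := by
  obtain ⟨ι, hι⟩ := Set.countable_iff_exists_injOn.1 hQc
  exact ⟨_, isBPartition_cellRefinement hQ, countable_cellRefinement hQc, bRefines_cellRefinement,
    finite_undecided_cellRefinement (d := d) hι⟩

end CellRefinement

section CoherentP

variable {U : Set B} {F : ℕ → Set B}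

lemma IsCoherentPUltrafilter.exists_mem_forall_notMem_of_trace (hU : IsCoherentPUltrafilter U)
    (hF : ∀ k, IsBUltrafilter (F k)) {p : ℕ → B} (hp : Function.Injective p)
    (hpart : IsBPartition (Set.range p)) (hpF : ∀ m k, p m ∉ F k)
    (hA : ∀ k, ∃ A : Set ℕ, (⨆ m ∈ A, p m) ∈ U ∧ (⨆ m ∈ A, p m) ∉ F k) :
    ∃ u ∈ U, ∀ k, u ∉ F k := by
  choose A hAU hAF using hA
  obtain ⟨S, hSU, hSA⟩ := (hU.2 p hp hpart).exists_diff_finite hAU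
  refine ⟨⨆ m ∈ S, p m, hSU, fun k hk => ?_⟩
  have hsplit : (⨆ m ∈ S, p m) ≤ (⨆ m ∈ A k, p m) ⊔ ⨆ m ∈ S \ A k, p m := by
    rw [← iSup_union]
    exact biSup_mono fun m hm => (em (m ∈ A k)).imp id fun h => ⟨hm, h⟩
  rcases (hF k).sup_mem_iff.1 ((hF k).1.mem_of_le hk hsplit) with h | h
  · exact hAF k h
  · obtain ⟨m, -, hm⟩ := (hF k).exists_mem_of_biSup_mem (hSA k) h
    exact hpF m k hm

lemma IsCoherentPUltrafilter.exists_mem_forall_notMem (hU : IsCoherentPUltrafilter U)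
    (hF : ∀ k, IsBUltrafilter (F k)) {P : Set B} (hP : IsBPartition P) (hPc : P.Countable)
    (hPF : ∀ p ∈ P, ∀ k, p ∉ F k) {d : ℕ → B} (hdU : ∀ k, d k ∈ U) (hdF : ∀ k, d k ∉ F k)
    (hdec : ∀ k, {p ∈ P | ¬ p ≤ d k ∧ ¬ p ≤ (d k)ᶜ}.Finite) :
    ∃ u ∈ U, ∀ k, u ∉ F k := by
  by_cases hPU : ∃ p ∈ P, p ∈ U
  · obtain ⟨p, hpP, hpU⟩ := hPU
    exact ⟨p, hpU, hPF p hpP⟩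
  push Not at hPU
  have hPinf : P.Infinite := fun hfin => by
    have htop : ⨆ p ∈ P, id p ∈ U := by simpa [← sSup_eq_iSup, hP.sSup_eq_top] using hU.1.1.2.1
    obtain ⟨p, hpP, hpU⟩ := hU.1.exists_mem_of_biSup_mem hfin htop
    exact hPU p hpP hpU
  obtain ⟨p, hp, rfl⟩ := hPc.exists_injective_range_eq hPinf
  refine hU.exists_mem_forall_notMem_of_trace hF hp hP (fun m => hPF _ ⟨m, rfl⟩) fun k =>
    ⟨{m | p m ≤ d k}, ?_, fun h => hdF k ((hF k).1.mem_of_le h (iSup₂_le fun m hm => hm))⟩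
  have hfin : {m | ¬ p m ≤ d k ∧ ¬ p m ≤ (d k)ᶜ}.Finite :=
    ((hdec k).preimage hp.injOn).subset fun m hm => ⟨⟨m, rfl⟩, hm⟩
  have hsplit := le_sup_biSup_of_iSup_eq_top (by rw [← sSup_range]; exact hP.sSup_eq_top) (d k)
  rcases hU.1.sup_mem_iff.1 (hU.1.1.mem_of_le (hdU k) hsplit) with h | h
  · exact h
  · obtain ⟨m, -, hm⟩ := hU.1.exists_mem_of_biSup_mem hfin h
    exact absurd hm (hPU _ ⟨m, rfl⟩)

end CoherentP

end Complete

/-- A coherent P-ultrafilter is an untouchable point of the Stone space: it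
avoids the closure of every countable nowhere dense set of other
ultrafilters. -/
theorem coherentP_is_untouchable [CompleteBooleanAlgebra B]
    (hcc : BCCC B) (U : Set B) (hU : IsCoherentPUltrafilter U)
    (F : ℕ → Set B) (hF : ∀ n, IsBUltrafilter (F n)) (hne : ∀ n, F n ≠ U)
    (hnwd : ∀ b : B, b ≠ ⊥ → ∃ c : B, c ≠ ⊥ ∧ c ≤ b ∧ ∀ n, c ∉ F n) :
    ∃ u ∈ U, ∀ n, u ∉ F n := by
  obtain ⟨Q, hQT, hQ⟩ := exists_isBPartition_subset (T := {c | c ≠ ⊥ ∧ ∀ n, c ∉ F n})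
    (fun h => h.1 rfl) fun b hb => by
      obtain ⟨c, hc, hcb, hcF⟩ := hnwd b hb
      exact ⟨c, ⟨hc, hcF⟩, hcb⟩
  choose d hdU hdF using fun n => hU.1.exists_mem_notMem_of_ne (hF n).1 (hne n)
  obtain ⟨P, hP, hPc, hPQ, hdec⟩ := hQ.exists_refinement_decides (hcc Q hQ.1 hQ.2.1) d
  refine hU.exists_mem_forall_notMem hF hP hPc (fun p hp n hpF => ?_) hdU hdF hdec
  obtain ⟨q, hq, hpq⟩ := hPQ p hp
  exact (hQT hq).2 n ((hF n).1.mem_of_le hpF hpq)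
end
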